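/- arXiv:1005.1625 — 10 statements merged into one kernel-verified Lean document; each statement's English description precedes it below -/
import Mathlib

section
/- Let A₁, B₁, C₁ be a non-overlapping Napoleon configuration for a nondegenerate triangle ABC in the Euclidean plane. Then the three segments AA₁, BB₁ and CC₁ have equal length: dist A A₁ = dist B B₁ = dist C C₁. -/
open EuclideanGeometry AffineSubspace MeasureTheory

/-!
Rotating the plane by `π / 3` about `C` maps `A₁` to `B` and `A` to `B₁`, so the triangles
`A₁ C A` and `B C B₁` are congruent (SAS) and `A A₁ = B B₁`; cyclically, `B B₁ = C C₁`.
In oriented angles: `∡ A₁ C B` and `∡ A C B₁` are both `± π / 3` with the same sign, because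
`A₁` and `B₁` lie on the outer sides, so `∡ A₁ C A = ∡ A₁ C B + ∡ B C A = ∡ B C A + ∡ A C B₁`.
-/

open Module Real

theorem AffineSubspace.SOppSide.left_ne_of_mem {R V P : Type*} [CommRing R] [PartialOrder R]
    [IsStrictOrderedRing R] [AddCommGroup V] [Module R V] [AddTorsor V P]
    {s : AffineSubspace R P} {x y p : P}
    (h : s.SOppSide x y) (hp : p ∈ s) : x ≠ p :=
  fun hx => h.left_notMem (hx ▸ hp)

theorem AffineSubspace.SOppSide.right_ne_of_mem {R V P : Type*} [CommRing R] [PartialOrder R]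
    [IsStrictOrderedRing R] [AddCommGroup V] [Module R V] [AddTorsor V P]
    {s : AffineSubspace R P} {x y p : P}
    (h : s.SOppSide x y) (hp : p ∈ s) : y ≠ p :=
  fun hy => h.right_notMem (hy ▸ hp)

namespace EuclideanGeometry

variable {V P : Type*} [NormedAddCommGroup V] [InnerProductSpace ℝ V] [MetricSpace P]
  [NormedAddTorsor V P]

theorem angle_eq_pi_div_three_of_dist_eq {a b c : P}
    (hab : dist a b = dist b c) (hac : dist a c = dist b c) (hbc : b ≠ c) :
    ∠ a b c = π / 3 := by
  have hs : dist b c ≠ 0 := dist_ne_zero.2 hbc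
  have hcos : Real.cos (∠ a b c) = Real.cos (π / 3) := by
    have := law_cos a b c
    rw [hab, hac, dist_comm c b] at this
    rw [Real.cos_pi_div_three]
    field_simp at this ⊢
    linarith
  exact Real.injOn_cos ⟨angle_nonneg _ _ _, angle_le_pi _ _ _⟩
    ⟨by positivity, by linarith [Real.pi_pos]⟩ hcos

variable [Fact (finrank ℝ V = 2)] [Module.Oriented ℝ V (Fin 2)]

theorem oangle_sign_eq_of_sOppSide {A B C A₁ B₁ : P}
    (hA : line[ℝ, B, C].SOppSide A A₁) (hB : line[ℝ, C, A].SOppSide B B₁) :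
    (∡ A₁ C B).sign = (∡ A C B₁).sign := by
  have hA' := hA.oangle_sign_eq_neg (left_mem_affineSpan_pair ℝ B C)
    (right_mem_affineSpan_pair ℝ B C)
  have hB' := hB.oangle_sign_eq_neg (left_mem_affineSpan_pair ℝ C A)
    (right_mem_affineSpan_pair ℝ C A)
  rw [oangle_rotate_sign, hA', oangle_rotate_sign B₁ A C, oangle_rotate_sign C B₁ A, hB',
    oangle_rotate_sign C B A]

section OuterEquilateral

variable {A B C A₁ B₁ : P}
  (hA₁B : dist A₁ B = dist B C) (hA₁C : dist A₁ C = dist B C)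
  (hAB₁ : dist A B₁ = dist A C) (hB₁C : dist B₁ C = dist A C)
  (hA : line[ℝ, B, C].SOppSide A A₁) (hB : line[ℝ, C, A].SOppSide B B₁)
include hA₁B hA₁C hAB₁ hB₁C hA hB

theorem oangle_eq_of_sOppSide_of_dist_eq : ∡ A₁ C A = ∡ B C B₁ := by
  have hBC : B ≠ C := hB.left_ne_of_mem (left_mem_affineSpan_pair ℝ C A)
  have hB₁C' : B₁ ≠ C := hB.right_ne_of_mem (left_mem_affineSpan_pair ℝ C A)
  have hAC : A ≠ C := hA.left_ne_of_mem (right_mem_affineSpan_pair ℝ B C)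
  have hA₁C' : A₁ ≠ C := hA.right_ne_of_mem (right_mem_affineSpan_pair ℝ B C)
  have hrot : ∡ A₁ C B = ∡ A C B₁ := by
    refine oangle_eq_of_angle_eq_of_sign_eq ?_ (oangle_sign_eq_of_sOppSide hA hB)
    rw [angle_eq_pi_div_three_of_dist_eq (by rw [hA₁C, dist_comm]) (by rw [hA₁B, dist_comm])
        hBC.symm,
      angle_eq_pi_div_three_of_dist_eq (by rw [dist_comm C, hB₁C])
        (by rw [dist_comm C, hB₁C, hAB₁]) hB₁C'.symm]
  rw [← oangle_add hA₁C' hBC hAC, ← oangle_add hBC hAC hB₁C', hrot, add_comm]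

theorem dist_eq_of_sOppSide_of_dist_eq : dist A A₁ = dist B B₁ := by
  have hangle : ∠ A₁ C A = ∠ B C B₁ := by
    rw [angle_eq_abs_oangle_toReal (hA.right_ne_of_mem (right_mem_affineSpan_pair ℝ B C))
        (hA.left_ne_of_mem (right_mem_affineSpan_pair ℝ B C)),
      angle_eq_abs_oangle_toReal (hB.left_ne_of_mem (left_mem_affineSpan_pair ℝ C A))
        (hB.right_ne_of_mem (left_mem_affineSpan_pair ℝ C A)),
      oangle_eq_of_sOppSide_of_dist_eq hA₁B hA₁C hAB₁ hB₁C hA hB]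
  have hcongr := side_angle_side hangle (by rw [hA₁C])
    (by rw [dist_comm C A, dist_comm C B₁, hB₁C])
  simpa [dist_comm] using hcongr.dist_eq 0 2

end OuterEquilateral

end EuclideanGeometry

open EuclideanSpace in
theorem napoleon_equal_segments_general
    (A B C A₁ B₁ C₁ : EuclideanSpace ℝ (Fin 2))
    (hA₁ : dist A₁ B = dist B C) (hA₁' : dist A₁ C = dist B C)
    (hB₁ : dist A B₁ = dist A C) (hB₁' : dist B₁ C = dist A C)
    (hC₁ : dist A C₁ = dist A B) (hC₁' : dist B C₁ = dist A B)
    (hsideA : (affineSpan ℝ {B, C}).SOppSide A A₁)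
    (hsideB : (affineSpan ℝ {C, A}).SOppSide B B₁)
    (hsideC : (affineSpan ℝ {A, B}).SOppSide C C₁)
    : dist A A₁ = dist B B₁ ∧ dist B B₁ = dist C C₁ := by
  -- Any orientation will do: the claim does not mention one.
  let _ : Module.Oriented ℝ (EuclideanSpace ℝ (Fin 2)) (Fin 2) :=
    ⟨(EuclideanSpace.basisFun (Fin 2) ℝ).toBasis.orientation⟩
  refine ⟨dist_eq_of_sOppSide_of_dist_eq hA₁ hA₁' hB₁ hB₁' hsideA hsideB,
    dist_eq_of_sOppSide_of_dist_eq ?_ ?_ ?_ ?_ hsideB hsideC⟩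
  · rwa [dist_comm C A]
  · rwa [dist_comm B₁ A, dist_comm C A]
  · rwa [dist_comm B A]
  · rwa [dist_comm C₁ A, dist_comm B A]

theorem napoleon_equal_segments
    (A B C A₁ B₁ C₁ : EuclideanSpace ℝ (Fin 2))
    (hABC : AffineIndependent ℝ ![A, B, C])
    (hA₁ : dist A₁ B = dist B C) (hA₁' : dist A₁ C = dist B C)
    (hB₁ : dist A B₁ = dist A C) (hB₁' : dist B₁ C = dist A C)
    (hC₁ : dist A C₁ = dist A B) (hC₁' : dist B C₁ = dist A B)
    (hsideA : (affineSpan ℝ {B, C}).SOppSide A A₁)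
    (hsideB : (affineSpan ℝ {C, A}).SOppSide B B₁)
    (hsideC : (affineSpan ℝ {A, B}).SOppSide C C₁)
    : dist A A₁ = dist B B₁ ∧ dist B B₁ = dist C C₁ :=
  napoleon_equal_segments_general A B C A₁ B₁ C₁ hA₁ hA₁' hB₁ hB₁' hC₁ hC₁' hsideA hsideB hsideC
end

section
/- Let A₁, B₁, C₁ be a non-overlapping Napoleon configuration for a nondegenerate triangle ABC in the Euclidean plane. Then the three lines AA₁, BB₁ and CC₁ are concurrent: there exists a point J lying on the line through A and A₁, on the line through B and B₁, and on the line through C and C₁. -/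
open EuclideanGeometry AffineSubspace MeasureTheory

/-!
An equilateral triangle erected on a segment `PQ` has apex `kiepertApex κ P Q`: the midpoint of
`PQ` shifted by `κ` times `Q - P` turned through a right angle, with `κ = ±√3/2`. The sign of `κ`
records the side of `PQ` on which the apex lies; as every apex lies opposite the third vertex,
each `κ` has the sign opposite to the orientation of `ABC`, so the three values coincide. For a
common `κ` of that sign the lines `AA₁`, `BB₁`, `CC₁` concur (Kiepert): `AA₁` and `BB₁` are not
parallel, and that their intersection lies on `CC₁` is a polynomial identity in the coordinates
and `κ`.
-/

lemma eq_of_sq_eq_sq_of_mul_neg {a b d : ℝ} (h : a ^ 2 = b ^ 2) (ha : a * d < 0)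
    (hb : b * d < 0) : a = b := by
  rcases sq_eq_sq_iff_eq_or_eq_neg.1 h with h | rfl
  · exact h
  · linarith [neg_mul b d]

namespace Napoleon

local notation "E²" => EuclideanSpace ℝ (Fin 2)

def cross (u v : E²) : ℝ := u 0 * v 1 - u 1 * v 0

noncomputable def rot90 (v : E²) : E² := !₂[-v 1, v 0]

noncomputable def kiepertApex (κ : ℝ) (P Q : E²) : E² :=
  midpoint ℝ P Q + κ • rot90 (Q - P)

@[simp]
lemma kiepertApex_apply_zero (κ : ℝ) (P Q : E²) :
    kiepertApex κ P Q 0 = (P 0 + Q 0) / 2 - κ * (Q 1 - P 1) := by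
  simp only [kiepertApex, midpoint_eq_smul_add, invOf_eq_inv, smul_add, rot90, PiLp.sub_apply,
    neg_sub, PiLp.add_apply, PiLp.smul_apply, smul_eq_mul, Matrix.cons_val_zero]
  ring

@[simp]
lemma kiepertApex_apply_one (κ : ℝ) (P Q : E²) :
    kiepertApex κ P Q 1 = (P 1 + Q 1) / 2 + κ * (Q 0 - P 0) := by
  simp only [kiepertApex, midpoint_eq_smul_add, invOf_eq_inv, smul_add, rot90, PiLp.sub_apply,
    PiLp.add_apply, PiLp.smul_apply, smul_eq_mul, Matrix.cons_val_one, Matrix.cons_val_fin_one]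
  ring

@[simp]
lemma kiepertApex_self (κ : ℝ) (P : E²) : kiepertApex κ P P = P := by
  ext i
  fin_cases i <;> simp

lemma norm_sq_eq (u : E²) : ‖u‖ ^ 2 = u 0 ^ 2 + u 1 ^ 2 := by
  simp [EuclideanSpace.norm_sq_eq, Fin.sum_univ_two]

lemma dist_sq_eq (x y : E²) : dist x y ^ 2 = (x 0 - y 0) ^ 2 + (x 1 - y 1) ^ 2 := by
  simp [dist_eq_norm, norm_sq_eq]

lemma sub_sq_add_sub_sq_pos {P Q : E²} (h : P ≠ Q) : 0 < (Q 0 - P 0) ^ 2 + (Q 1 - P 1) ^ 2 := by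
  rw [← PiLp.sub_apply, ← PiLp.sub_apply, ← norm_sq_eq]
  positivity [sub_ne_zero.2 h.symm]

lemma cross_sub_sub_rotate (A B C : E²) : cross (C - B) (A - B) = cross (B - A) (C - A) := by
  simp only [cross, PiLp.sub_apply]
  ring

lemma cross_sub_eq_add_cross_sub (u X : E²) {Y P : E²} :
    cross u (Y - P) = cross u (Y - X) + cross u (X - P) := by
  simp only [cross, PiLp.sub_apply]
  ring

lemma cross_lineMap_sub (u X Y P : E²) (t : ℝ) :
    cross u (AffineMap.lineMap X Y t - P) = (1 - t) * cross u (X - P) + t * cross u (Y - P) := by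
  simp only [cross, AffineMap.lineMap_apply, vsub_eq_sub, vadd_eq_add, PiLp.sub_apply,
    PiLp.add_apply, PiLp.smul_apply, smul_eq_mul]
  ring

lemma cross_kiepertApex (κ : ℝ) (P Q : E²) :
    cross (Q - P) (kiepertApex κ P Q - P) = κ * ‖Q - P‖ ^ 2 := by
  simp only [cross, PiLp.sub_apply, kiepertApex_apply_one, kiepertApex_apply_zero, norm_sq_eq]
  ring

lemma mem_line_iff_cross_eq_zero {P Q Z : E²} (hPQ : P ≠ Q) :
    Z ∈ line[ℝ, P, Q] ↔ cross (Q - P) (Z - P) = 0 := by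
  conv_lhs => rw [← vsub_vadd Z P, vadd_left_mem_affineSpan_pair]
  constructor
  · rintro ⟨r, hr⟩
    rw [vsub_eq_sub, vsub_eq_sub] at hr
    rw [← hr]
    simp only [cross, PiLp.smul_apply, PiLp.sub_apply, smul_eq_mul]
    ring
  · intro h
    have hN := (sub_sq_add_sub_sq_pos hPQ).ne'
    refine ⟨((Z 0 - P 0) * (Q 0 - P 0) + (Z 1 - P 1) * (Q 1 - P 1)) /
      ((Q 0 - P 0) ^ 2 + (Q 1 - P 1) ^ 2), ?_⟩
    simp only [cross, PiLp.sub_apply] at h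
    ext i
    fin_cases i
    · simp only [Fin.zero_eta, Fin.isValue, vsub_eq_sub, PiLp.smul_apply, PiLp.sub_apply,
        smul_eq_mul]
      field_simp
      linear_combination (Q 1 - P 1) * h
    · simp only [Fin.mk_one, Fin.isValue, vsub_eq_sub, PiLp.smul_apply, PiLp.sub_apply,
        smul_eq_mul]
      field_simp
      linear_combination (P 0 - Q 0) * h

lemma cross_mul_cross_neg_of_sOppSide {P Q X Y : E²} (hPQ : P ≠ Q)
    (h : line[ℝ, P, Q].SOppSide X Y) : cross (Q - P) (X - P) * cross (Q - P) (Y - P) < 0 := by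
  obtain ⟨p, hp, t, ⟨ht0, ht1⟩, rfl⟩ := wOppSide_iff_exists_wbtw.1 h.wOppSide
  have hX := (mem_line_iff_cross_eq_zero hPQ).not.1 h.left_notMem
  have hY := (mem_line_iff_cross_eq_zero hPQ).not.1 h.right_notMem
  have hp := (mem_line_iff_cross_eq_zero hPQ).1 hp
  rw [cross_lineMap_sub] at hp
  set a := cross (Q - P) (X - P)
  set b := cross (Q - P) (Y - P)
  by_contra! hab
  have hpb : (1 - t) * (a * b) + t * b ^ 2 = 0 := by linear_combination b * hp
  have htb : t * b ^ 2 = 0 := by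
    linarith [mul_nonneg (sub_nonneg.2 ht1) hab, mul_nonneg ht0 (sq_nonneg b)]
  have ht : t = 0 := by simpa [hY] using htb
  simp [ht, hX] at hp

lemma mul_cross_neg_of_sOppSide_kiepertApex {κ : ℝ} {P Q X : E²}
    (h : line[ℝ, P, Q].SOppSide X (kiepertApex κ P Q)) : κ * cross (Q - P) (X - P) < 0 := by
  have hPQ : P ≠ Q := by
    rintro rfl
    exact h.right_notMem (by simp)
  have hN : 0 < ‖Q - P‖ ^ 2 := by positivity [sub_ne_zero.2 hPQ.symm]
  have := cross_mul_cross_neg_of_sOppSide hPQ h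
  rw [cross_kiepertApex] at this
  nlinarith

lemma exists_eq_kiepertApex {P Q X : E²} (hP : dist X P = dist P Q) (hQ : dist X Q = dist P Q) :
    ∃ κ : ℝ, κ ^ 2 = 3 / 4 ∧ X = kiepertApex κ P Q := by
  rcases eq_or_ne P Q with rfl | hPQ
  · exact ⟨√3 / 2, by norm_num [div_pow], by simpa using hP⟩
  have hN := (sub_sq_add_sub_sq_pos hPQ).ne'
  have hXP : (X 0 - P 0) ^ 2 + (X 1 - P 1) ^ 2 = (Q 0 - P 0) ^ 2 + (Q 1 - P 1) ^ 2 := by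
    rw [← dist_sq_eq, ← dist_sq_eq, hP, dist_comm]
  have hXQ : (X 0 - Q 0) ^ 2 + (X 1 - Q 1) ^ 2 = (Q 0 - P 0) ^ 2 + (Q 1 - P 1) ^ 2 := by
    rw [← dist_sq_eq, ← dist_sq_eq, hQ, dist_comm]
  have hdot : (X 0 - P 0) * (Q 0 - P 0) + (X 1 - P 1) * (Q 1 - P 1) =
      ((Q 0 - P 0) ^ 2 + (Q 1 - P 1) ^ 2) / 2 := by
    linear_combination (hXP - hXQ) / 2
  refine ⟨cross (Q - P) (X - P) / ((Q 0 - P 0) ^ 2 + (Q 1 - P 1) ^ 2), ?_, ?_⟩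
  · simp only [cross, PiLp.sub_apply]
    field_simp
    -- Lagrange's identity `cross² + dot² = ‖Q - P‖² ‖X - P‖²`
    linear_combination 4 * ((Q 0 - P 0) ^ 2 + (Q 1 - P 1) ^ 2) * hXP -
      4 * ((X 0 - P 0) * (Q 0 - P 0) + (X 1 - P 1) * (Q 1 - P 1) +
        ((Q 0 - P 0) ^ 2 + (Q 1 - P 1) ^ 2) / 2) * hdot
  · ext i
    fin_cases i
    · simp only [Fin.zero_eta, Fin.isValue, cross, PiLp.sub_apply, kiepertApex_apply_zero]
      field_simp
      linear_combination 2 * (Q 0 - P 0) * hdot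
    · simp only [Fin.mk_one, Fin.isValue, cross, PiLp.sub_apply, kiepertApex_apply_one]
      field_simp
      linear_combination 2 * (Q 1 - P 1) * hdot

lemma exists_mem_lines_of_cross {A A' B B' C C' : E²} (hC : C ≠ C')
    (hAB : cross (B' - B) (A' - A) ≠ 0)
    (h : cross (C' - C) (A - C) * cross (B' - B) (A' - A) =
      cross (B' - B) (A - B) * cross (C' - C) (A' - A)) :
    ∃ J, J ∈ line[ℝ, A, A'] ∧ J ∈ line[ℝ, B, B'] ∧ J ∈ line[ℝ, C, C'] := by
  have hB : B ≠ B' := by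
    rintro rfl
    simp [cross] at hAB
  let t := -cross (B' - B) (A - B) / cross (B' - B) (A' - A)
  refine ⟨AffineMap.lineMap A A' t, AffineMap.lineMap_mem_affineSpan_pair t A A',
    (mem_line_iff_cross_eq_zero hB).2 ?_, (mem_line_iff_cross_eq_zero hC).2 ?_⟩
  · rw [cross_lineMap_sub, cross_sub_eq_add_cross_sub _ A (Y := A')]
    simp only [t]
    field_simp
    ring
  · rw [cross_lineMap_sub, cross_sub_eq_add_cross_sub _ A (Y := A')]
    simp only [t]
    field_simp
    linear_combination h

theorem kiepert_lines_concurrent {κ : ℝ} {A B C : E²} (h : κ * cross (B - A) (C - A) < 0) :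
    ∃ J, J ∈ line[ℝ, A, kiepertApex κ B C] ∧ J ∈ line[ℝ, B, kiepertApex κ C A] ∧
      J ∈ line[ℝ, C, kiepertApex κ A B] := by
  refine exists_mem_lines_of_cross ?_ ?_ (by simp only [cross, PiLp.sub_apply, kiepertApex_apply_zero, kiepertApex_apply_one]; ring)
  · rintro rfl
    rw [cross_kiepertApex, ← mul_assoc, ← sq] at h
    exact (not_lt.2 (by positivity)) h
  · have hx : κ * cross (kiepertApex κ C A - B) (kiepertApex κ B C - A) =
        κ ^ 2 * (‖B - A‖ ^ 2 + ‖C - B‖ ^ 2 + ‖A - C‖ ^ 2) / 2 -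
          (κ ^ 2 + 3 / 4) * (κ * cross (B - A) (C - A)) := by
      simp only [cross, PiLp.sub_apply, kiepertApex_apply_zero, kiepertApex_apply_one, norm_sq_eq]
      ring
    have hpos : 0 < κ * cross (kiepertApex κ C A - B) (kiepertApex κ B C - A) := by
      rw [hx]
      have := mul_pos (by positivity : (0 : ℝ) < κ ^ 2 + 3 / 4) (neg_pos.2 h)
      have : 0 ≤ κ ^ 2 * (‖B - A‖ ^ 2 + ‖C - B‖ ^ 2 + ‖A - C‖ ^ 2) / 2 := by positivity
      linarith
    exact right_ne_zero_of_mul hpos.ne'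

end Napoleon

open Napoleon in
theorem napoleon_concurrent_lines_general
    (A B C A₁ B₁ C₁ : EuclideanSpace ℝ (Fin 2))
    (hA₁ : dist A₁ B = dist B C) (hA₁' : dist A₁ C = dist B C)
    (hB₁ : dist A B₁ = dist A C) (hB₁' : dist B₁ C = dist A C)
    (hC₁ : dist A C₁ = dist A B) (hC₁' : dist B C₁ = dist A B)
    (hsideA : (affineSpan ℝ {B, C}).SOppSide A A₁)
    (hsideB : (affineSpan ℝ {C, A}).SOppSide B B₁)
    (hsideC : (affineSpan ℝ {A, B}).SOppSide C C₁)
    : ∃ J : EuclideanSpace ℝ (Fin 2),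
      J ∈ line[ℝ, A, A₁] ∧ J ∈ line[ℝ, B, B₁] ∧ J ∈ line[ℝ, C, C₁] := by
  obtain ⟨κA, hκA, rfl⟩ := exists_eq_kiepertApex hA₁ hA₁'
  obtain ⟨κB, hκB, rfl⟩ := exists_eq_kiepertApex (P := C) (Q := A)
    (by rw [hB₁', dist_comm A C]) (by rw [dist_comm, hB₁, dist_comm])
  obtain ⟨κC, hκC, rfl⟩ := exists_eq_kiepertApex (P := A) (Q := B)
    (by rw [dist_comm, hC₁]) (by rw [dist_comm, hC₁'])
  have hA := mul_cross_neg_of_sOppSide_kiepertApex hsideA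
  have hB := mul_cross_neg_of_sOppSide_kiepertApex hsideB
  have hC := mul_cross_neg_of_sOppSide_kiepertApex hsideC
  rw [cross_sub_sub_rotate] at hA
  rw [cross_sub_sub_rotate, cross_sub_sub_rotate] at hB
  obtain rfl := eq_of_sq_eq_sq_of_mul_neg (hκA.trans hκC.symm) hA hC
  obtain rfl := eq_of_sq_eq_sq_of_mul_neg (hκB.trans hκC.symm) hB hC
  exact kiepert_lines_concurrent hC

theorem napoleon_concurrent_lines
    (A B C A₁ B₁ C₁ : EuclideanSpace ℝ (Fin 2))
    (hABC : AffineIndependent ℝ ![A, B, C])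
    (hA₁ : dist A₁ B = dist B C) (hA₁' : dist A₁ C = dist B C)
    (hB₁ : dist A B₁ = dist A C) (hB₁' : dist B₁ C = dist A C)
    (hC₁ : dist A C₁ = dist A B) (hC₁' : dist B C₁ = dist A B)
    (hsideA : (affineSpan ℝ {B, C}).SOppSide A A₁)
    (hsideB : (affineSpan ℝ {C, A}).SOppSide B B₁)
    (hsideC : (affineSpan ℝ {A, B}).SOppSide C C₁)
    : ∃ J : EuclideanSpace ℝ (Fin 2),
      J ∈ line[ℝ, A, A₁] ∧ J ∈ line[ℝ, B, B₁] ∧ J ∈ line[ℝ, C, C₁] :=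
  napoleon_concurrent_lines_general A B C A₁ B₁ C₁ hA₁ hA₁' hB₁ hB₁' hC₁ hC₁' hsideA hsideB hsideC
end

section
/- Let A₁, B₁, C₁ be a non-overlapping Napoleon configuration for a nondegenerate triangle ABC in the Euclidean plane. Then the circumscribed circles of the three equilateral triangles A₁BC, AB₁C and ABC₁ pass through a common point J, and this point J lies on each of the three lines AA₁, BB₁, CC₁. -/
open EuclideanGeometry AffineSubspace MeasureTheory
open scoped RealInnerProductSpace

/-!
Each outer Napoleon vertex is `apex t` of its side, `midpoint + t • rot side`, where `t ^ 2 = 3 / 4`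
expresses that the triangle is equilateral and the opposite-side condition makes the sign of `t`
opposite to the orientation of `ABC`, so the same `t` serves all three sides. By the power of the
point `C`, the second intersection `J` of the line `CC₁` with the circle `ABC₁` is an explicit point
`C + λ • (C₁ - C)`, and a direct computation shows that it does not change when `A, B, C` are
permuted cyclically. Hence `J` also lies on `AA₁`, `BB₁` and on the circles `A₁BC`, `AB₁C`; the
uniqueness of the circle through three distinct points of the plane gives the statement.
-/

theorem AffineSubspace.SOppSide.inner_mul_inner_neg {V P : Type*} [NormedAddCommGroup V]
    [InnerProductSpace ℝ V] [AddTorsor V P] {s : AffineSubspace ℝ P} {n : V} {p₀ x y : P}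
    (hs : ∀ p, p ∈ s ↔ ⟪n, p -ᵥ p₀⟫ = 0) (h : s.SOppSide x y) :
    ⟪n, x -ᵥ p₀⟫ * ⟪n, y -ᵥ p₀⟫ < 0 := by
  obtain ⟨p, hp, hxpy⟩ := h.exists_sbtw
  obtain ⟨θ, ⟨hθ₀, hθ₁⟩, rfl⟩ := hxpy.mem_image_Ioo
  have hx : ⟪n, x -ᵥ p₀⟫ ≠ 0 := (hs x).not.1 h.left_notMem
  have hy : ⟪n, y -ᵥ p₀⟫ ≠ 0 := (hs y).not.1 h.right_notMem
  rw [hs, AffineMap.lineMap_apply, vadd_vsub_assoc, ← vsub_sub_vsub_cancel_right y x p₀,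
    inner_add_right, inner_smul_right, inner_sub_right] at hp
  rcases lt_or_gt_of_ne hx with hx | hx <;> rcases lt_or_gt_of_ne hy with hy | hy <;> nlinarith

theorem EuclideanGeometry.Sphere.lineMap_mem_of_mul_dist_sq_eq_power {V P : Type*}
    [NormedAddCommGroup V] [InnerProductSpace ℝ V] [MetricSpace P] [NormedAddTorsor V P]
    {s : Sphere P} {p q : P} {c : ℝ} (hq : q ∈ s) (hc : c * dist p q ^ 2 = s.power p) :
    AffineMap.lineMap p q c ∈ s := by
  rw [mem_sphere] at hq ⊢
  have hsq : dist (AffineMap.lineMap p q c) s.center ^ 2 = s.radius ^ 2 := by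
    rw [Sphere.power, ← hq, dist_comm p q] at hc
    rw [← hq]
    simp only [dist_eq_norm_vsub V, AffineMap.lineMap_apply, vadd_vsub_assoc] at hc ⊢
    rw [← vsub_add_vsub_cancel q p s.center] at hc ⊢
    rw [norm_add_sq_real, norm_smul, mul_pow, Real.norm_eq_abs, sq_abs, inner_smul_left]
    rw [norm_add_sq_real] at hc ⊢
    simp only [RCLike.conj_to_real]
    linear_combination (c - 1) * hc
  exact (sq_eq_sq₀ dist_nonneg (hq ▸ dist_nonneg)).1 hsq

theorem EuclideanGeometry.Sphere.eq_of_finrank_eq_two {V P : Type*}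
    [NormedAddCommGroup V] [InnerProductSpace ℝ V] [MetricSpace P] [NormedAddTorsor V P]
    [FiniteDimensional ℝ V] (hd : Module.finrank ℝ V = 2) {s₁ s₂ : Sphere P} {p₁ p₂ p₃ : P}
    (h₁₂ : p₁ ≠ p₂) (h₁₃ : p₁ ≠ p₃) (h₂₃ : p₂ ≠ p₃)
    (h₁ : p₁ ∈ s₁) (h₂ : p₂ ∈ s₁) (h₃ : p₃ ∈ s₁) (h₁' : p₁ ∈ s₂) (h₂' : p₂ ∈ s₂) (h₃' : p₃ ∈ s₂) :
    s₁ = s₂ := by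
  by_contra hs
  rcases eq_of_mem_sphere_of_mem_sphere_of_finrank_eq_two hd hs h₁₂ h₁ h₂ h₃ h₁' h₂' h₃' with
    h | h
  exacts [h₁₃ h.symm, h₂₃ h.symm]

local notation "ℝ²" => EuclideanSpace ℝ (Fin 2)

noncomputable section

namespace Napoleon

def rot (v : ℝ²) : ℝ² := !₂[-v 1, v 0]

def apex (t : ℝ) (B C : ℝ²) : ℝ² := midpoint ℝ B C + t • rot (C - B)

variable {t : ℝ} {A B C X : ℝ²}

@[simp] theorem rot_apply_zero (v : ℝ²) : rot v 0 = -v 1 := rfl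
@[simp] theorem rot_apply_one (v : ℝ²) : rot v 1 = v 0 := rfl

@[simp] theorem apex_apply_zero (t : ℝ) (B C : ℝ²) :
    apex t B C 0 = (B 0 + C 0) / 2 - t * (C 1 - B 1) := by
  simp [apex, midpoint_eq_smul_add]; ring

@[simp] theorem apex_apply_one (t : ℝ) (B C : ℝ²) :
    apex t B C 1 = (B 1 + C 1) / 2 + t * (C 0 - B 0) := by
  simp [apex, midpoint_eq_smul_add]; ring

theorem inner_eq_fin_two (u v : ℝ²) : ⟪u, v⟫ = u 0 * v 0 + u 1 * v 1 := by
  simp [PiLp.inner_apply, Fin.sum_univ_two]; ring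

theorem dist_sq_eq_fin_two (x y : ℝ²) : dist x y ^ 2 = (x 0 - y 0) ^ 2 + (x 1 - y 1) ^ 2 := by
  simp [EuclideanSpace.dist_eq, Fin.sum_univ_two, Real.dist_eq, sq_abs]
  rw [Real.sq_sqrt (by positivity)]

theorem inner_rot_sub_rotate (A B C : ℝ²) :
    ⟪rot (C - B), A - B⟫ = ⟪rot (A - C), B - C⟫ := by
  simp only [inner_eq_fin_two, rot_apply_zero, rot_apply_one, PiLp.sub_apply]; ring

theorem mem_line_iff_inner_rot_eq_zero (hBC : B ≠ C) :
    X ∈ line[ℝ, B, C] ↔ ⟪rot (C - B), X - B⟫ = 0 := by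
  have hL : 0 < (C 0 - B 0) ^ 2 + (C 1 - B 1) ^ 2 := by
    rw [← dist_sq_eq_fin_two]; exact pow_pos (dist_pos.2 hBC.symm) 2
  rw [mem_affineSpan_pair_iff_exists_lineMap_eq]
  simp only [inner_eq_fin_two, rot_apply_zero, rot_apply_one, PiLp.sub_apply]
  constructor
  · rintro ⟨r, rfl⟩
    simp [AffineMap.lineMap_apply_module]; ring
  · intro h
    refine ⟨((C 0 - B 0) * (X 0 - B 0) + (C 1 - B 1) * (X 1 - B 1)) /
      ((C 0 - B 0) ^ 2 + (C 1 - B 1) ^ 2), ?_⟩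
    ext i
    fin_cases i <;> simp [AffineMap.lineMap_apply_module] <;> field_simp
    · linear_combination (C 1 - B 1) * h
    · linear_combination (B 0 - C 0) * h

theorem dist_apex_left_sq (t : ℝ) (B C : ℝ²) :
    dist B (apex t B C) ^ 2 = (1 / 4 + t ^ 2) * dist B C ^ 2 := by
  simp only [dist_sq_eq_fin_two, apex_apply_zero, apex_apply_one]; ring

theorem dist_apex_right_sq (t : ℝ) (B C : ℝ²) :
    dist C (apex t B C) ^ 2 = (1 / 4 + t ^ 2) * dist B C ^ 2 := by
  simp only [dist_sq_eq_fin_two, apex_apply_zero, apex_apply_one]; ring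

theorem inner_rot_apex_sub (t : ℝ) (B C : ℝ²) :
    ⟪rot (C - B), apex t B C - B⟫ = t * dist B C ^ 2 := by
  simp only [inner_eq_fin_two, dist_sq_eq_fin_two, rot_apply_zero, rot_apply_one,
    PiLp.sub_apply, apex_apply_zero, apex_apply_one]
  ring

theorem exists_eq_apex_of_dist_eq (hBC : B ≠ C) (h₁ : dist X B = dist B C)
    (h₂ : dist X C = dist B C) : ∃ s : ℝ, s ^ 2 = 3 / 4 ∧ X = apex s B C := by
  have hL : dist B C ^ 2 ≠ 0 := by positivity [dist_pos.2 hBC]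
  have e₁ := congrArg (· ^ 2) h₁
  have e₂ := congrArg (· ^ 2) h₂
  have hX : X = apex (⟪rot (C - B), X - B⟫ / dist B C ^ 2) B C := by
    ext i
    fin_cases i <;>
      simp [inner_eq_fin_two, dist_sq_eq_fin_two] at e₁ e₂ hL ⊢ <;> field_simp
    · linear_combination (C 0 - B 0) * (e₁ - e₂)
    · linear_combination (C 1 - B 1) * (e₁ - e₂)
  refine ⟨_, ?_, hX⟩
  have e := dist_apex_left_sq (⟪rot (C - B), X - B⟫ / dist B C ^ 2) B C
  rw [← hX, dist_comm, h₁] at e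
  have := mul_right_cancel₀ hL ((one_mul _).trans e)
  linarith

theorem ne_of_sOppSide_of_dist_eq (h : dist X B = dist B C)
    (hside : line[ℝ, B, C].SOppSide A X) : B ≠ C := by
  rintro rfl
  rw [dist_self, dist_eq_zero] at h
  exact hside.right_notMem (h ▸ left_mem_affineSpan_pair ℝ _ _)

theorem apex_eq_of_sOppSide (ht : t ^ 2 = 3 / 4) (htD : t * ⟪rot (C - B), A - B⟫ < 0)
    (h₁ : dist X B = dist B C) (h₂ : dist X C = dist B C)
    (hside : line[ℝ, B, C].SOppSide A X) : X = apex t B C := by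
  have hBC := ne_of_sOppSide_of_dist_eq h₁ hside
  obtain ⟨s, hs, rfl⟩ := exists_eq_apex_of_dist_eq hBC h₁ h₂
  have hsD := hside.inner_mul_inner_neg fun p => mem_line_iff_inner_rot_eq_zero hBC
  rw [vsub_eq_sub, vsub_eq_sub, inner_rot_apex_sub, mul_left_comm, ← mul_assoc] at hsD
  have hsD' : s * ⟪rot (C - B), A - B⟫ < 0 :=
    neg_of_mul_neg_left hsD (by positivity)
  have : (s - t) * (s + t) = 0 := by linear_combination hs - ht
  rcases mul_eq_zero.1 this with h | h
  · rw [sub_eq_zero.1 h]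
  · rw [eq_neg_of_add_eq_zero_left h, neg_mul] at hsD'
    linarith

theorem exists_sq_eq_three_div_four_and_mul_neg {d : ℝ} (hd : d ≠ 0) :
    ∃ t : ℝ, t ^ 2 = 3 / 4 ∧ t * d < 0 := by
  have h3 : (√3 / 2) ^ 2 = 3 / 4 := by rw [div_pow, Real.sq_sqrt (by norm_num)]; norm_num
  rcases hd.lt_or_gt with hd | hd
  · exact ⟨√3 / 2, h3, mul_neg_of_pos_of_neg (by positivity) hd⟩
  · exact ⟨-(√3 / 2), by rw [neg_sq, h3], mul_neg_of_neg_of_pos (by simp) hd⟩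

def apexCircle (t : ℝ) (A B : ℝ²) : Sphere ℝ² := ⟨apex (t / 3) A B, dist A B / √3⟩

def fermatDenom (t : ℝ) (A B C : ℝ²) : ℝ :=
  3 / 2 * ⟪rot (B - A), C - A⟫ - t / 2 * (dist A B ^ 2 + dist B C ^ 2 + dist C A ^ 2)

/-- The line parameter `λ` is chosen so that `λ * dist C C₁ ^ 2` is the power of `C` with respect to
`apexCircle t A B` (`dist_apex_sq_eq_fermatDenom`, `power_apexCircle`): this is the second
intersection of the line `CC₁` with that circle. -/
def fermatPoint (t : ℝ) (A B C : ℝ²) : ℝ² :=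
  AffineMap.lineMap C (apex t A B)
    ((⟪rot (B - A), C - A⟫ / 2 - t * ⟪A - C, B - C⟫) / fermatDenom t A B C)

theorem mem_apexCircle_iff :
    X ∈ apexCircle t A B ↔ dist X (apex (t / 3) A B) ^ 2 = dist A B ^ 2 / 3 := by
  rw [mem_sphere, ← sq_eq_sq₀ dist_nonneg (by simp [apexCircle]; positivity), apexCircle,
    div_pow, Real.sq_sqrt (by norm_num)]

theorem left_mem_apexCircle (ht : t ^ 2 = 3 / 4) : A ∈ apexCircle t A B := by
  rw [mem_apexCircle_iff, dist_apex_left_sq]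
  linear_combination dist A B ^ 2 / 9 * ht

theorem right_mem_apexCircle (ht : t ^ 2 = 3 / 4) : B ∈ apexCircle t A B := by
  rw [mem_apexCircle_iff, dist_apex_right_sq]
  linear_combination dist A B ^ 2 / 9 * ht

theorem apex_mem_apexCircle (ht : t ^ 2 = 3 / 4) : apex t A B ∈ apexCircle t A B := by
  rw [mem_apexCircle_iff]
  simp only [dist_sq_eq_fin_two, apex_apply_zero, apex_apply_one]
  linear_combination 4 / 9 * ((A 0 - B 0) ^ 2 + (A 1 - B 1) ^ 2) * ht

theorem dist_apex_sq_eq_fermatDenom (ht : t ^ 2 = 3 / 4) :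
    dist C (apex t A B) ^ 2 = -(4 * t / 3) * fermatDenom t A B C := by
  simp only [fermatDenom, inner_eq_fin_two, dist_sq_eq_fin_two, rot_apply_zero, rot_apply_one,
    PiLp.sub_apply, apex_apply_zero, apex_apply_one]
  linear_combination -((A 0 + B 0 - 2 * C 0) ^ 2 + (A 1 + B 1 - 2 * C 1) ^ 2) / 3 * ht

theorem power_apexCircle (ht : t ^ 2 = 3 / 4) :
    (apexCircle t A B).power C =
      -(4 * t / 3) * (⟪rot (B - A), C - A⟫ / 2 - t * ⟪A - C, B - C⟫) := by
  rw [Sphere.power, apexCircle, div_pow, Real.sq_sqrt (by norm_num)]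
  simp only [inner_eq_fin_two, dist_sq_eq_fin_two, rot_apply_zero, rot_apply_one,
    PiLp.sub_apply, apex_apply_zero, apex_apply_one]
  linear_combination (-(4 / 3) * ((A 0 - C 0) * (B 0 - C 0) + (A 1 - C 1) * (B 1 - C 1)) +
    ((A 0 - B 0) ^ 2 + (A 1 - B 1) ^ 2) / 9) * ht

theorem fermatPoint_mem_apexCircle (ht : t ^ 2 = 3 / 4) (hΔ : fermatDenom t A B C ≠ 0) :
    fermatPoint t A B C ∈ apexCircle t A B := by
  refine Sphere.lineMap_mem_of_mul_dist_sq_eq_power (apex_mem_apexCircle ht) ?_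
  rw [dist_apex_sq_eq_fermatDenom ht, power_apexCircle ht]
  field_simp

theorem fermatDenom_rotate (t : ℝ) (A B C : ℝ²) :
    fermatDenom t B C A = fermatDenom t A B C := by
  simp only [fermatDenom, inner_eq_fin_two, dist_sq_eq_fin_two, rot_apply_zero, rot_apply_one,
    PiLp.sub_apply]
  ring

theorem fermatDenom_ne_zero (ht : t ^ 2 = 3 / 4) (htD : t * ⟪rot (B - A), C - A⟫ < 0) :
    fermatDenom t A B C ≠ 0 := by
  intro hΔ
  have h : t * fermatDenom t A B C = 3 / 2 * (t * ⟪rot (B - A), C - A⟫) -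
      3 / 8 * (dist A B ^ 2 + dist B C ^ 2 + dist C A ^ 2) := by
    unfold fermatDenom
    linear_combination -(dist A B ^ 2 + dist B C ^ 2 + dist C A ^ 2) / 2 * ht
  rw [hΔ, mul_zero] at h
  nlinarith [sq_nonneg (dist A B), sq_nonneg (dist B C), sq_nonneg (dist C A)]

theorem fermatPoint_rotate (ht : t ^ 2 = 3 / 4) (htD : t * ⟪rot (B - A), C - A⟫ < 0) :
    fermatPoint t A B C = fermatPoint t B C A := by
  have hΔ := fermatDenom_ne_zero ht htD
  have key : ∀ i, fermatDenom t A B C * (C i - A i)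
      + (⟪rot (B - A), C - A⟫ / 2 - t * ⟪A - C, B - C⟫) * (apex t A B i - C i)
      - (⟪rot (C - B), A - B⟫ / 2 - t * ⟪B - A, C - A⟫) * (apex t B C i - A i) = 0 := by
    intro i
    fin_cases i <;>
      simp only [fermatDenom, inner_eq_fin_two, dist_sq_eq_fin_two, rot_apply_zero,
        rot_apply_one, PiLp.sub_apply, Fin.zero_eta, Fin.mk_one, apex_apply_zero, apex_apply_one]
    · linear_combination
        ((B 0 - A 0) * (C 1 - A 1) - (B 1 - A 1) * (C 0 - A 0)) * (A 0 - C 0) * ht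
    · linear_combination
        ((B 0 - A 0) * (C 1 - A 1) - (B 1 - A 1) * (C 0 - A 0)) * (A 1 - C 1) * ht
  unfold fermatPoint
  rw [fermatDenom_rotate t A B C]
  ext i
  simp only [AffineMap.lineMap_apply_module', PiLp.add_apply, PiLp.smul_apply, smul_eq_mul,
    PiLp.sub_apply]
  field_simp
  linear_combination 2 * key i

theorem dist_fermatPoint_eq (ht : t ^ 2 = 3 / 4) (htD : t * ⟪rot (B - A), C - A⟫ < 0)
    (O : ℝ²) (r : ℝ) (hA : dist O A = r) (hB : dist O B = r) (hC₁ : dist O (apex t A B) = r) :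
    dist O (fermatPoint t A B C) = r := by
  have hAB : A ≠ B := by
    rintro rfl
    simp [inner_eq_fin_two] at htD
  have hL : dist A B ^ 2 ≠ 0 := by positivity [dist_pos.2 hAB]
  have hAC₁ : A ≠ apex t A B := fun h => hL (by
    have := dist_apex_left_sq t A B
    rw [← h, dist_self, ht] at this
    linarith)
  have hBC₁ : B ≠ apex t A B := fun h => hL (by
    have := dist_apex_right_sq t A B
    rw [← h, dist_self, ht] at this
    linarith)
  have hs : apexCircle t A B = ⟨O, r⟩ :=
    Sphere.eq_of_finrank_eq_two finrank_euclideanSpace_fin hAB hAC₁ hBC₁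
      (left_mem_apexCircle ht) (right_mem_apexCircle ht) (apex_mem_apexCircle ht)
      (mem_sphere'.2 hA) (mem_sphere'.2 hB) (mem_sphere'.2 hC₁)
  exact mem_sphere'.1 (hs ▸ fermatPoint_mem_apexCircle ht (fermatDenom_ne_zero ht htD))

end Napoleon

end

open Napoleon in
theorem napoleon_circumcircles_common_point_general
    (A B C A₁ B₁ C₁ : EuclideanSpace ℝ (Fin 2))
    (hA₁ : dist A₁ B = dist B C) (hA₁' : dist A₁ C = dist B C)
    (hB₁ : dist A B₁ = dist A C) (hB₁' : dist B₁ C = dist A C)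
    (hC₁ : dist A C₁ = dist A B) (hC₁' : dist B C₁ = dist A B)
    (hsideA : (affineSpan ℝ {B, C}).SOppSide A A₁)
    (hsideB : (affineSpan ℝ {C, A}).SOppSide B B₁)
    (hsideC : (affineSpan ℝ {A, B}).SOppSide C C₁)
    : ∃ J : EuclideanSpace ℝ (Fin 2),
      (∀ (O : EuclideanSpace ℝ (Fin 2)) (r : ℝ),
        dist O A₁ = r → dist O B = r → dist O C = r → dist O J = r) ∧
      (∀ (O : EuclideanSpace ℝ (Fin 2)) (r : ℝ),
        dist O A = r → dist O B₁ = r → dist O C = r → dist O J = r) ∧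
      (∀ (O : EuclideanSpace ℝ (Fin 2)) (r : ℝ),
        dist O A = r → dist O B = r → dist O C₁ = r → dist O J = r) ∧
      J ∈ line[ℝ, A, A₁] ∧ J ∈ line[ℝ, B, B₁] ∧ J ∈ line[ℝ, C, C₁] := by
  have hBC := ne_of_sOppSide_of_dist_eq hA₁ hsideA
  obtain ⟨t, ht, htA⟩ := exists_sq_eq_three_div_four_and_mul_neg
    ((mem_line_iff_inner_rot_eq_zero hBC).not.1 hsideA.left_notMem)
  have htB : t * ⟪rot (A - C), B - C⟫ < 0 := by rwa [← inner_rot_sub_rotate]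
  have htC : t * ⟪rot (B - A), C - A⟫ < 0 := by rwa [← inner_rot_sub_rotate]
  obtain rfl := apex_eq_of_sOppSide ht htA hA₁ hA₁' hsideA
  obtain rfl := apex_eq_of_sOppSide ht htB (by rwa [dist_comm C])
    (by rwa [dist_comm, dist_comm C]) hsideB
  obtain rfl := apex_eq_of_sOppSide ht htC (by rwa [dist_comm]) (by rwa [dist_comm]) hsideC
  have hJA : fermatPoint t A B C = fermatPoint t B C A := fermatPoint_rotate ht htC
  have hJB : fermatPoint t A B C = fermatPoint t C A B := (fermatPoint_rotate ht htB).symm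
  refine ⟨fermatPoint t A B C, fun O r h₁ h₂ h₃ => ?_, fun O r h₁ h₂ h₃ => ?_,
    dist_fermatPoint_eq ht htC, ?_, ?_, AffineMap.lineMap_mem_affineSpan_pair _ _ _⟩
  · rw [hJA]
    exact dist_fermatPoint_eq ht htA O r h₂ h₃ h₁
  · rw [hJB]
    exact dist_fermatPoint_eq ht htB O r h₃ h₁ h₂
  · rw [hJA]
    exact AffineMap.lineMap_mem_affineSpan_pair _ _ _
  · rw [hJB]
    exact AffineMap.lineMap_mem_affineSpan_pair _ _ _

theorem napoleon_circumcircles_common_point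
    (A B C A₁ B₁ C₁ : EuclideanSpace ℝ (Fin 2))
    (hABC : AffineIndependent ℝ ![A, B, C])
    (hA₁ : dist A₁ B = dist B C) (hA₁' : dist A₁ C = dist B C)
    (hB₁ : dist A B₁ = dist A C) (hB₁' : dist B₁ C = dist A C)
    (hC₁ : dist A C₁ = dist A B) (hC₁' : dist B C₁ = dist A B)
    (hsideA : (affineSpan ℝ {B, C}).SOppSide A A₁)
    (hsideB : (affineSpan ℝ {C, A}).SOppSide B B₁)
    (hsideC : (affineSpan ℝ {A, B}).SOppSide C C₁)
    : ∃ J : EuclideanSpace ℝ (Fin 2),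
      (∀ (O : EuclideanSpace ℝ (Fin 2)) (r : ℝ),
        dist O A₁ = r → dist O B = r → dist O C = r → dist O J = r) ∧
      (∀ (O : EuclideanSpace ℝ (Fin 2)) (r : ℝ),
        dist O A = r → dist O B₁ = r → dist O C = r → dist O J = r) ∧
      (∀ (O : EuclideanSpace ℝ (Fin 2)) (r : ℝ),
        dist O A = r → dist O B = r → dist O C₁ = r → dist O J = r) ∧
      J ∈ line[ℝ, A, A₁] ∧ J ∈ line[ℝ, B, B₁] ∧ J ∈ line[ℝ, C, C₁] :=
  napoleon_circumcircles_common_point_general A B C A₁ B₁ C₁ hA₁ hA₁' hB₁ hB₁' hC₁ hC₁' hsideA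
    hsideB hsideC
end

section
/- (Napoleon's Theorem, outer case.) Let A₁, B₁, C₁ be a non-overlapping Napoleon configuration for a nondegenerate triangle ABC in the Euclidean plane, and let G₁, G₂, G₃ be the centroids of the triangles A₁BC, AB₁C, ABC₁ respectively. Then the triangle G₁G₂G₃ is equilateral (dist G₁ G₂ = dist G₂ G₃ = dist G₃ G₁) and its centroid (G₁+G₂+G₃)/3 coincides with the centroid G = (A+B+C)/3 of triangle ABC. -/
/-!
Fix an orientation of the plane, with right-angle rotation `J` and area form `ω`. The apex of an
equilateral triangle erected on `BC` is `(B + C)/2 + t • J (C - B)` with `t² = 3/4`; since it lies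
across `BC` from `A`, `t` and the signed area `ω (B - A) (C - A)` have opposite signs.
The signed area is invariant under cyclic relabelling, so the three outer apexes share the same `t`.
Now `ρ = 1/2 + t J` is a rotation by `±60°`, i.e. `ρ² = ρ - 1`, and a direct computation gives
`G₃ - G₁ = (1 - ρ) (G₂ - G₁)`, so `G₁ G₂ G₃` is equilateral; the `J`-terms cancel in `G₁ + G₂ + G₃`.
-/

open EuclideanGeometry AffineSubspace MeasureTheory
open Module RealInnerProductSpace

theorem AffineSubspace.SOppSide.mul_neg_of_map_eq_zero {k V P : Type*} [Field k] [LinearOrder k]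
    [IsStrictOrderedRing k] [AddCommGroup V] [Module k V] [AddTorsor V P]
    {s : AffineSubspace k P} {x y : P} (h : s.SOppSide x y) {f : P →ᵃ[k] k}
    (hf : ∀ p ∈ s, f p = 0) (hy : f y ≠ 0) : f x * f y < 0 := by
  obtain ⟨p, hp, hxpy⟩ := h.exists_sbtw
  obtain ⟨⟨τ, ⟨hτ₀, hτ₁⟩, rfl⟩, -⟩ := sbtw_iff_mem_image_Ioo_and_ne.mp hxpy
  have hfp : (1 - τ) * f x + τ * f y = 0 := by
    rw [← hf _ hp, AffineMap.apply_lineMap, AffineMap.lineMap_apply_module]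
    simp only [smul_eq_mul]
  have hprod : (1 - τ) * (f x * f y) = -(τ * f y ^ 2) := by linear_combination f y * hfp
  have : 0 < τ * f y ^ 2 := by positivity
  by_contra! hnn
  nlinarith [mul_nonneg (sub_pos.mpr hτ₁).le hnn]

theorem eq_of_sq_eq_sq_of_mul_neg_s4 {s t d : ℝ} (h : s ^ 2 = t ^ 2) (hs : s * d < 0)
    (ht : t * d < 0) : s = t := by
  rcases sq_eq_sq_iff_eq_or_eq_neg.mp h with h | rfl
  · exact h
  · linarith

theorem napoleon_centroid_eq {V : Type*} [AddCommGroup V] [Module ℝ V] (L : V →ₗ[ℝ] V) (t : ℝ)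
    {A B C A₁ B₁ C₁ : V}
    (hA₁ : A₁ = (2⁻¹ : ℝ) • (B + C) + t • L (C - B))
    (hB₁ : B₁ = (2⁻¹ : ℝ) • (C + A) + t • L (A - C))
    (hC₁ : C₁ = (2⁻¹ : ℝ) • (A + B) + t • L (B - A)) :
    (3 : ℝ)⁻¹ • ((3 : ℝ)⁻¹ • (A₁ + B + C) + (3 : ℝ)⁻¹ • (A + B₁ + C) + (3 : ℝ)⁻¹ • (A + B + C₁)) =
      (3 : ℝ)⁻¹ • (A + B + C) := by
  subst hA₁ hB₁ hC₁
  simp only [map_sub]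
  module

namespace Orientation

variable {V : Type*} [NormedAddCommGroup V] [InnerProductSpace ℝ V] [Fact (finrank ℝ V = 2)]
  (o : Orientation ℝ V (Fin 2))

local notation "ω" => o.areaForm
local notation "J" => o.rightAngleRotation

theorem norm_sq_smul_add_smul_rightAngleRotation (a b : ℝ) (v : V) :
    ‖a • v + b • J v‖ ^ 2 = (a ^ 2 + b ^ 2) * ‖v‖ ^ 2 := by
  rw [norm_add_sq_real, norm_smul, norm_smul, inner_smul_left, inner_smul_right,
    inner_rightAngleRotation_right, areaForm_apply_self, LinearIsometryEquiv.norm_map]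
  simp only [Real.norm_eq_abs, mul_pow, sq_abs]
  ring

theorem norm_sq_smul_eq_inner_smul_add_areaForm_smul (a x : V) :
    ‖a‖ ^ 2 • x = ⟪a, x⟫ • a + ω a x • J a := by
  apply ext_inner_left ℝ
  intro y
  rw [inner_smul_right, inner_add_right, inner_smul_right, inner_smul_right,
    inner_rightAngleRotation_right, ← o.inner_mul_inner_add_areaForm_mul_areaForm a y x,
    o.areaForm_swap y a, real_inner_comm y a]
  ring

theorem exists_eq_apex_of_dist_eq {B C P : V} (hBC : B ≠ C) (hPB : dist P B = dist B C)
    (hPC : dist P C = dist B C) :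
    ∃ t : ℝ, t ^ 2 = 3 / 4 ∧ P = (2⁻¹ : ℝ) • (B + C) + t • J (C - B) := by
  set u := C - B
  set w := P - (2⁻¹ : ℝ) • (B + C)
  have hu : ‖u‖ ≠ 0 := norm_ne_zero_iff.mpr (sub_ne_zero.mpr hBC.symm)
  have hBC' : dist B C = ‖u‖ := by rw [dist_comm, dist_eq_norm]
  have hPB' : ‖w + (2⁻¹ : ℝ) • u‖ = ‖u‖ := by
    rw [← hBC', ← hPB, dist_eq_norm]; congr 1; module
  have hPC' : ‖w - (2⁻¹ : ℝ) • u‖ = ‖u‖ := by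
    rw [← hBC', ← hPC, dist_eq_norm]; congr 1; module
  rw [← sq_eq_sq₀ (norm_nonneg _) (norm_nonneg _), norm_add_sq_real] at hPB'
  rw [← sq_eq_sq₀ (norm_nonneg _) (norm_nonneg _), norm_sub_sq_real] at hPC'
  simp only [inner_smul_right, norm_smul, Real.norm_eq_abs, abs_inv, abs_two, mul_pow] at hPB' hPC'
  have hwu : ⟪u, w⟫ = 0 := by rw [real_inner_comm]; linarith
  have hw : ‖w‖ ^ 2 = 3 / 4 * ‖u‖ ^ 2 := by linarith
  have hdecomp := o.norm_sq_smul_eq_inner_smul_add_areaForm_smul u w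
  rw [hwu, zero_smul, zero_add] at hdecomp
  have hwt : w = (ω u w / ‖u‖ ^ 2) • J u := by
    rw [div_eq_inv_mul, mul_smul, ← hdecomp, inv_smul_smul₀ (pow_ne_zero 2 hu)]
  refine ⟨ω u w / ‖u‖ ^ 2, ?_, eq_add_of_sub_eq' hwt⟩
  rw [hwt, norm_smul, LinearIsometryEquiv.norm_map, Real.norm_eq_abs, mul_pow, sq_abs] at hw
  exact mul_right_cancel₀ (pow_ne_zero 2 hu) hw

theorem areaForm_sub_sub_rotate (A B C : V) : ω (C - B) (A - B) = ω (B - A) (C - A) := by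
  have h₁ : C - B = (C - A) - (B - A) := by abel
  have h₂ : A - B = -(B - A) := by abel
  rw [h₁, h₂, map_sub, LinearMap.sub_apply, map_neg, map_neg, areaForm_apply_self,
    o.areaForm_swap (C - A)]
  ring

theorem exists_eq_apex_of_sOppSide {A B C P : V} (hPB : dist P B = dist B C)
    (hPC : dist P C = dist B C) (hside : line[ℝ, B, C].SOppSide A P) :
    ∃ t : ℝ, t ^ 2 = 3 / 4 ∧ t * ω (B - A) (C - A) < 0 ∧
      P = (2⁻¹ : ℝ) • (B + C) + t • J (C - B) := by
  have hBC : B ≠ C := by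
    rintro rfl
    rw [dist_self, dist_eq_zero] at hPB
    exact hside.right_notMem (hPB ▸ left_mem_affineSpan_pair ℝ B B)
  obtain ⟨t, ht, rfl⟩ := o.exists_eq_apex_of_dist_eq hBC hPB hPC
  refine ⟨t, ht, ?_, rfl⟩
  let f : V →ᵃ[ℝ] ℝ := (ω (C - B)).toAffineMap.comp (AffineEquiv.vaddConst ℝ B).symm.toAffineMap
  have hf (x : V) : f x = ω (C - B) (x - B) := rfl
  have hfline : ∀ p ∈ line[ℝ, B, C], f p = 0 := by
    intro p hp
    obtain ⟨r, rfl⟩ := mem_affineSpan_pair_iff_exists_lineMap_eq.mp hp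
    rw [AffineMap.apply_lineMap, hf, hf, sub_self, map_zero, areaForm_apply_self,
      AffineMap.lineMap_same_apply]
  have hfP : f ((2⁻¹ : ℝ) • (B + C) + t • J (C - B)) = ‖C - B‖ ^ 2 * t := by
    have : (2⁻¹ : ℝ) • (B + C) + t • J (C - B) - B = (2⁻¹ : ℝ) • (C - B) + t • J (C - B) := by
      module
    rw [hf, this, map_add, map_smul, map_smul, areaForm_apply_self,
      areaForm_rightAngleRotation_right, real_inner_self_eq_norm_sq]
    simp only [smul_eq_mul]
    ring
  have hnorm : 0 < ‖C - B‖ ^ 2 := by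
    have : C - B ≠ 0 := sub_ne_zero.mpr hBC.symm
    positivity
  have ht₀ : t ≠ 0 := by rintro rfl; norm_num at ht
  have hsign := hside.mul_neg_of_map_eq_zero hfline (hfP ▸ mul_ne_zero hnorm.ne' ht₀)
  rw [hfP, hf, areaForm_sub_sub_rotate] at hsign
  exact neg_of_mul_neg_right (a := ‖C - B‖ ^ 2) (by linarith) hnorm.le

theorem norm_smul_add_smul_rightAngleRotation {a b : ℝ} (hab : a ^ 2 + b ^ 2 = 1) (v : V) :
    ‖a • v + b • J v‖ = ‖v‖ := by
  rw [← sq_eq_sq₀ (norm_nonneg _) (norm_nonneg _), norm_sq_smul_add_smul_rightAngleRotation, hab,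
    one_mul]

theorem dist_eq_of_sub_eq_rotation {X Y Z : V} {s : ℝ} (hs : s ^ 2 = 3 / 4)
    (h : Z - X = (2⁻¹ : ℝ) • (Y - X) + s • J (Y - X)) :
    dist X Y = dist Y Z ∧ dist Y Z = dist Z X := by
  have hZY : Z - Y = (-2⁻¹ : ℝ) • (Y - X) + s • J (Y - X) := by
    linear_combination (norm := module) h
  have hXY : dist X Y = ‖Y - X‖ := by rw [dist_comm, dist_eq_norm]
  have hYZ : dist Y Z = ‖Y - X‖ := by
    rw [dist_comm, dist_eq_norm, hZY, o.norm_smul_add_smul_rightAngleRotation (by linarith)]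
  have hZX : dist Z X = ‖Y - X‖ := by
    rw [dist_eq_norm, h, o.norm_smul_add_smul_rightAngleRotation (by linarith)]
  exact ⟨hXY.trans hYZ.symm, hYZ.trans hZX.symm⟩

theorem napoleon_sub_eq_rotation {t : ℝ} (ht : t ^ 2 = 3 / 4) {A B C A₁ B₁ C₁ G₁ G₂ G₃ : V}
    (hA₁ : A₁ = (2⁻¹ : ℝ) • (B + C) + t • J (C - B))
    (hB₁ : B₁ = (2⁻¹ : ℝ) • (C + A) + t • J (A - C))
    (hC₁ : C₁ = (2⁻¹ : ℝ) • (A + B) + t • J (B - A))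
    (hG₁ : G₁ = (3 : ℝ)⁻¹ • (A₁ + B + C)) (hG₂ : G₂ = (3 : ℝ)⁻¹ • (A + B₁ + C))
    (hG₃ : G₃ = (3 : ℝ)⁻¹ • (A + B + C₁)) :
    G₃ - G₁ = (2⁻¹ : ℝ) • (G₂ - G₁) + (-t) • J (G₂ - G₁) := by
  subst hA₁ hB₁ hC₁ hG₁ hG₂ hG₃
  simp only [map_add, map_sub, map_smul, rightAngleRotation_rightAngleRotation]
  linear_combination (norm := module) ht • ((3 : ℝ)⁻¹ • ((2 : ℝ) • C - A - B))

end Orientation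

theorem napoleon_outer_general
    (A B C A₁ B₁ C₁ : EuclideanSpace ℝ (Fin 2))
    (hA₁ : dist A₁ B = dist B C) (hA₁' : dist A₁ C = dist B C)
    (hB₁ : dist A B₁ = dist A C) (hB₁' : dist B₁ C = dist A C)
    (hC₁ : dist A C₁ = dist A B) (hC₁' : dist B C₁ = dist A B)
    (hsideA : (affineSpan ℝ {B, C}).SOppSide A A₁)
    (hsideB : (affineSpan ℝ {C, A}).SOppSide B B₁)
    (hsideC : (affineSpan ℝ {A, B}).SOppSide C C₁)
    (G₁ G₂ G₃ : EuclideanSpace ℝ (Fin 2))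
    (hG₁ : G₁ = (3:ℝ)⁻¹ • (A₁ + B + C))
    (hG₂ : G₂ = (3:ℝ)⁻¹ • (A + B₁ + C))
    (hG₃ : G₃ = (3:ℝ)⁻¹ • (A + B + C₁)) :
    (dist G₁ G₂ = dist G₂ G₃ ∧ dist G₂ G₃ = dist G₃ G₁) ∧
      (3:ℝ)⁻¹ • (G₁ + G₂ + G₃) = (3:ℝ)⁻¹ • (A + B + C) := by
  have : Fact (finrank ℝ (EuclideanSpace ℝ (Fin 2)) = 2) := ⟨finrank_euclideanSpace_fin⟩
  let o := (EuclideanSpace.basisFun (Fin 2) ℝ).toBasis.orientation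
  obtain ⟨t, ht, hsA, hA⟩ := o.exists_eq_apex_of_sOppSide hA₁ hA₁' hsideA
  obtain ⟨tB, htB, hsB, hB⟩ := o.exists_eq_apex_of_sOppSide (hB₁'.trans (dist_comm A C))
    ((dist_comm B₁ A).trans (hB₁.trans (dist_comm A C))) hsideB
  obtain ⟨tC, htC, hsC, hC⟩ := o.exists_eq_apex_of_sOppSide ((dist_comm C₁ A).trans hC₁)
    ((dist_comm C₁ B).trans hC₁') hsideC
  rw [o.areaForm_sub_sub_rotate] at hsB
  rw [o.areaForm_sub_sub_rotate, o.areaForm_sub_sub_rotate] at hsC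
  have htB' : tB = t := eq_of_sq_eq_sq_of_mul_neg_s4 (htB.trans ht.symm) hsB hsA
  have htC' : tC = t := eq_of_sq_eq_sq_of_mul_neg_s4 (htC.trans ht.symm) hsC hsA
  subst tB tC
  refine ⟨o.dist_eq_of_sub_eq_rotation (by rwa [neg_sq])
    (o.napoleon_sub_eq_rotation ht hA hB hC hG₁ hG₂ hG₃), ?_⟩
  subst hG₁ hG₂ hG₃
  exact napoleon_centroid_eq o.rightAngleRotation.toLinearMap t hA hB hC

theorem napoleon_outer
    (A B C A₁ B₁ C₁ : EuclideanSpace ℝ (Fin 2))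
    (hABC : AffineIndependent ℝ ![A, B, C])
    (hA₁ : dist A₁ B = dist B C) (hA₁' : dist A₁ C = dist B C)
    (hB₁ : dist A B₁ = dist A C) (hB₁' : dist B₁ C = dist A C)
    (hC₁ : dist A C₁ = dist A B) (hC₁' : dist B C₁ = dist A B)
    (hsideA : (affineSpan ℝ {B, C}).SOppSide A A₁)
    (hsideB : (affineSpan ℝ {C, A}).SOppSide B B₁)
    (hsideC : (affineSpan ℝ {A, B}).SOppSide C C₁)
    (G₁ G₂ G₃ : EuclideanSpace ℝ (Fin 2))
    (hG₁ : G₁ = (3:ℝ)⁻¹ • (A₁ + B + C))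
    (hG₂ : G₂ = (3:ℝ)⁻¹ • (A + B₁ + C))
    (hG₃ : G₃ = (3:ℝ)⁻¹ • (A + B + C₁)) :
    (dist G₁ G₂ = dist G₂ G₃ ∧ dist G₂ G₃ = dist G₃ G₁) ∧
      (3:ℝ)⁻¹ • (G₁ + G₂ + G₃) = (3:ℝ)⁻¹ • (A + B + C) :=
  napoleon_outer_general A B C A₁ B₁ C₁ hA₁ hA₁' hB₁ hB₁' hC₁ hC₁' hsideA hsideB hsideC G₁ G₂ G₃ hG₁
    hG₂ hG₃
end

section
/- (Napoleon's Theorem, inner case.) Let A₁', B₁', C₁' be an overlapping Napoleon configuration for a nondegenerate triangle ABC in the Euclidean plane, and let G₁', G₂', G₃' be the centroids of the triangles A₁'BC, AB₁'C, ABC₁' respectively. Then the triangle G₁'G₂'G₃' is equilateral (dist G₁' G₂' = dist G₂' G₃' = dist G₃' G₁') and its centroid (G₁'+G₂'+G₃')/3 coincides with the centroid G = (A+B+C)/3 of triangle ABC. -/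
/-! The apex `X` of an equilateral triangle erected on `PQ` is `P + R (Q - P)`, where `R` is the
rotation by `±π/3` with the sign of the orientation of `PQX`. The same-side hypotheses give the three
triangles `A₁'BC`, `AB₁'C`, `ABC₁'` the orientation of `ABC`, so a single rotation `R` serves all
three apexes, and `R² = R - 1`. The rotation terms then cancel in `A₁' + B₁' + C₁'`, which gives the
centroid statement, and `R` maps `G₂' - G₁'` to `G₂' - G₃'`, so the Napoleon triangle is
equilateral. -/

open EuclideanGeometry AffineSubspace MeasureTheory
open Module Real

section Napoleon

variable {E : Type*} [NormedAddCommGroup E] [NormedSpace ℝ E] {A B C A' B' C' : E}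

theorem apex_add_apex_add_apex (R : E →ₗ[ℝ] E) (hA : A' = B + R (C - B))
    (hB : B' = C + R (A - C)) (hC : C' = A + R (B - A)) : A' + B' + C' = A + B + C := by
  have hsum : R (C - B) + R (A - C) + R (B - A) = 0 := by
    rw [← map_add, ← map_add]
    simp
  subst hA hB hC
  linear_combination (norm := module) hsum

theorem map_centroid_sub_centroid (R : E →ₗ[ℝ] E) (hR : ∀ x, R (R x) = R x - x)
    (hA : A' = B + R (C - B)) (hB : B' = C + R (A - C)) (hC : C' = A + R (B - A)) :
    R ((3:ℝ)⁻¹ • (A + B' + C) - (3:ℝ)⁻¹ • (A' + B + C)) =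
      (3:ℝ)⁻¹ • (A + B' + C) - (3:ℝ)⁻¹ • (A + B + C') := by
  subst hA hB hC
  simp only [map_sub, map_add, map_smul, hR]
  module

theorem dist_centroid_eq_dist_centroid (R : E →ₗᵢ[ℝ] E) (hR : ∀ x, R (R x) = R x - x)
    (hA : A' = B + R (C - B)) (hB : B' = C + R (A - C)) (hC : C' = A + R (B - A)) :
    dist ((3:ℝ)⁻¹ • (A' + B + C)) ((3:ℝ)⁻¹ • (A + B' + C)) =
      dist ((3:ℝ)⁻¹ • (A + B' + C)) ((3:ℝ)⁻¹ • (A + B + C')) := by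
  rw [dist_comm, dist_eq_norm, dist_eq_norm, ← R.norm_map]
  exact congrArg norm (map_centroid_sub_centroid R.toLinearMap hR hA hB hC)

theorem napoleon_of_rotation (R : E →ₗᵢ[ℝ] E) (hR : ∀ x, R (R x) = R x - x)
    (hA : A' = B + R (C - B)) (hB : B' = C + R (A - C)) (hC : C' = A + R (B - A)) :
    (dist ((3:ℝ)⁻¹ • (A' + B + C)) ((3:ℝ)⁻¹ • (A + B' + C)) =
        dist ((3:ℝ)⁻¹ • (A + B' + C)) ((3:ℝ)⁻¹ • (A + B + C')) ∧
      dist ((3:ℝ)⁻¹ • (A + B' + C)) ((3:ℝ)⁻¹ • (A + B + C')) =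
        dist ((3:ℝ)⁻¹ • (A + B + C')) ((3:ℝ)⁻¹ • (A' + B + C))) ∧
      (3:ℝ)⁻¹ • ((3:ℝ)⁻¹ • (A' + B + C) + (3:ℝ)⁻¹ • (A + B' + C) + (3:ℝ)⁻¹ • (A + B + C')) =
        (3:ℝ)⁻¹ • (A + B + C) := by
  refine ⟨⟨dist_centroid_eq_dist_centroid R hR hA hB hC, ?_⟩, ?_⟩
  · convert dist_centroid_eq_dist_centroid R hR hB hC hA using 3 <;> abel
  · linear_combination (norm := module)
      ((3:ℝ)⁻¹ * (3:ℝ)⁻¹) • apex_add_apex_add_apex R.toLinearMap hA hB hC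

end Napoleon

theorem Orientation.rotation_rotation_eq_sub_of_cos_eq {V : Type*} [NormedAddCommGroup V]
    [InnerProductSpace ℝ V] [Fact (finrank ℝ V = 2)] (o : Orientation ℝ V (Fin 2))
    {θ : Real.Angle} (h : θ.cos = 1 / 2) (x : V) :
    o.rotation θ (o.rotation θ x) = o.rotation θ x - x := by
  have hs : θ.sin ^ 2 = 3 / 4 := by
    linear_combination θ.cos_sq_add_sin_sq - (θ.cos + 1 / 2) * h
  simp only [o.rotation_apply, map_add, map_smul, o.rightAngleRotation_rightAngleRotation, h]
  linear_combination (norm := module) -hs • x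

namespace EuclideanGeometry

variable {V P : Type*} [NormedAddCommGroup V] [InnerProductSpace ℝ V] [MetricSpace P]
  [NormedAddTorsor V P]

theorem angle_eq_pi_div_three_of_dist_eq_s5 {p q x : P} (hpq : p ≠ q) (hxp : dist x p = dist p q)
    (hxq : dist x q = dist p q) : ∠ q p x = π / 3 := by
  rw [angle, InnerProductGeometry.angle,
    real_inner_eq_norm_mul_self_add_norm_mul_self_sub_norm_sub_mul_self_div_two]
  refine Real.arccos_eq_of_eq_cos (by linarith [Real.pi_nonneg]) (by linarith [Real.pi_nonneg]) ?_
  simp only [vsub_sub_vsub_cancel_right, ← dist_eq_norm_vsub, dist_comm q p, dist_comm q x, hxp,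
    hxq, Real.cos_pi_div_three]
  have : dist p q ≠ 0 := dist_ne_zero.2 hpq
  field

theorem ne_of_dist_eq_of_sSameSide {p q x y : P} (hx : dist x p = dist p q)
    (hs : line[ℝ, p, q].SSameSide x y) : p ≠ q := by
  rintro rfl
  rw [dist_self, dist_eq_zero] at hx
  exact hs.2.1 (hx ▸ left_mem_affineSpan_pair ℝ x p)

variable [Fact (finrank ℝ V = 2)] [Module.Oriented ℝ V (Fin 2)]

theorem vsub_eq_rotation_oangle_vsub {p q x : P} (hx : dist x p = dist p q) :
    x -ᵥ p = o.rotation (∡ q p x) (q -ᵥ p) := by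
  rw [oangle, eq_comm, Orientation.rotation_oangle_eq_iff_norm_eq, ← dist_eq_norm_vsub,
    ← dist_eq_norm_vsub, hx, dist_comm]

theorem oangle_sign_eq_of_sSameSide {p q x y : P} (hs : line[ℝ, p, q].SSameSide x y) :
    (∡ q p x).sign = (∡ p y q).sign := by
  rw [← oangle_rotate_sign, hs.oangle_sign_eq (left_mem_affineSpan_pair ℝ p q)
    (right_mem_affineSpan_pair ℝ p q)]

theorem oangle_eq_of_equilateral_of_sSameSide {p q x y p' q' x' y' : P}
    (hxp : dist x p = dist p q) (hxq : dist x q = dist p q) (hs : line[ℝ, p, q].SSameSide x y)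
    (hxp' : dist x' p' = dist p' q') (hxq' : dist x' q' = dist p' q')
    (hs' : line[ℝ, p', q'].SSameSide x' y') (hy : (∡ p y q).sign = (∡ p' y' q').sign) :
    ∡ q p x = ∡ q' p' x' := by
  refine oangle_eq_of_angle_eq_of_sign_eq ?_ ?_
  · rw [angle_eq_pi_div_three_of_dist_eq_s5 (ne_of_dist_eq_of_sSameSide hxp hs) hxp hxq,
      angle_eq_pi_div_three_of_dist_eq_s5 (ne_of_dist_eq_of_sSameSide hxp' hs') hxp' hxq']
  · rw [oangle_sign_eq_of_sSameSide hs, oangle_sign_eq_of_sSameSide hs', hy]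

theorem cos_oangle_eq_of_dist_eq {p q x : P} (hpq : p ≠ q) (hxp : dist x p = dist p q)
    (hxq : dist x q = dist p q) : (∡ q p x).cos = 1 / 2 := by
  have hxp' : x ≠ p := by
    rw [← dist_ne_zero, hxp]
    exact dist_ne_zero.2 hpq
  rw [cos_oangle_eq_cos_angle hpq.symm hxp', angle_eq_pi_div_three_of_dist_eq_s5 hpq hxp hxq,
    Real.cos_pi_div_three]

end EuclideanGeometry

theorem napoleon_inner_general
    (A B C A₁' B₁' C₁' : EuclideanSpace ℝ (Fin 2))
    (hA₁' : dist A₁' B = dist B C) (hA₁'2 : dist A₁' C = dist B C)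
    (hB₁' : dist A B₁' = dist A C) (hB₁'2 : dist B₁' C = dist A C)
    (hC₁' : dist A C₁' = dist A B) (hC₁'2 : dist B C₁' = dist A B)
    (hsideA' : (affineSpan ℝ {B, C}).SSameSide A₁' A)
    (hsideB' : (affineSpan ℝ {C, A}).SSameSide B₁' B)
    (hsideC' : (affineSpan ℝ {A, B}).SSameSide C₁' C)
    (G₁' G₂' G₃' : EuclideanSpace ℝ (Fin 2))
    (hG₁' : G₁' = (3:ℝ)⁻¹ • (A₁' + B + C))
    (hG₂' : G₂' = (3:ℝ)⁻¹ • (A + B₁' + C))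
    (hG₃' : G₃' = (3:ℝ)⁻¹ • (A + B + C₁')) :
    (dist G₁' G₂' = dist G₂' G₃' ∧ dist G₂' G₃' = dist G₃' G₁') ∧
      (3:ℝ)⁻¹ • (G₁' + G₂' + G₃') = (3:ℝ)⁻¹ • (A + B + C) := by
  let _ : Module.Oriented ℝ (EuclideanSpace ℝ (Fin 2)) (Fin 2) :=
    ⟨(EuclideanSpace.basisFun (Fin 2) ℝ).toBasis.orientation⟩
  have : Fact (finrank ℝ (EuclideanSpace ℝ (Fin 2)) = 2) := ⟨finrank_euclideanSpace_fin⟩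
  rw [dist_comm A] at hB₁' hC₁'
  rw [dist_comm A C] at hB₁' hB₁'2
  rw [dist_comm B] at hC₁'2
  subst hG₁' hG₂' hG₃'
  set θ := ∡ C B A₁'
  have hθB : ∡ A C B₁' = θ :=
    oangle_eq_of_equilateral_of_sSameSide hB₁'2 hB₁' hsideB' hA₁' hA₁'2 hsideA'
      ((oangle_rotate_sign A C B).trans (oangle_rotate_sign B A C))
  have hθC : ∡ B A C₁' = θ :=
    oangle_eq_of_equilateral_of_sSameSide hC₁' hC₁'2 hsideC' hA₁' hA₁'2 hsideA'
      (oangle_rotate_sign B A C)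
  have hA : A₁' = B + o.rotation θ (C - B) := by
    rw [← vsub_eq_sub, ← vsub_eq_rotation_oangle_vsub hA₁', vsub_eq_sub, add_sub_cancel]
  have hB : B₁' = C + o.rotation θ (A - C) := by
    rw [← hθB, ← vsub_eq_sub, ← vsub_eq_rotation_oangle_vsub hB₁'2, vsub_eq_sub, add_sub_cancel]
  have hC : C₁' = A + o.rotation θ (B - A) := by
    rw [← hθC, ← vsub_eq_sub, ← vsub_eq_rotation_oangle_vsub hC₁', vsub_eq_sub, add_sub_cancel]
  have hcos : θ.cos = 1 / 2 :=
    cos_oangle_eq_of_dist_eq (ne_of_dist_eq_of_sSameSide hA₁' hsideA') hA₁' hA₁'2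
  exact napoleon_of_rotation (o.rotation θ).toLinearIsometry
    (o.rotation_rotation_eq_sub_of_cos_eq hcos) hA hB hC

theorem napoleon_inner
    (A B C A₁' B₁' C₁' : EuclideanSpace ℝ (Fin 2))
    (hABC : AffineIndependent ℝ ![A, B, C])
    (hA₁' : dist A₁' B = dist B C) (hA₁'2 : dist A₁' C = dist B C)
    (hB₁' : dist A B₁' = dist A C) (hB₁'2 : dist B₁' C = dist A C)
    (hC₁' : dist A C₁' = dist A B) (hC₁'2 : dist B C₁' = dist A B)
    (hsideA' : (affineSpan ℝ {B, C}).SSameSide A₁' A)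
    (hsideB' : (affineSpan ℝ {C, A}).SSameSide B₁' B)
    (hsideC' : (affineSpan ℝ {A, B}).SSameSide C₁' C)
    (G₁' G₂' G₃' : EuclideanSpace ℝ (Fin 2))
    (hG₁' : G₁' = (3:ℝ)⁻¹ • (A₁' + B + C))
    (hG₂' : G₂' = (3:ℝ)⁻¹ • (A + B₁' + C))
    (hG₃' : G₃' = (3:ℝ)⁻¹ • (A + B + C₁')) :
    (dist G₁' G₂' = dist G₂' G₃' ∧ dist G₂' G₃' = dist G₃' G₁') ∧
      (3:ℝ)⁻¹ • (G₁' + G₂' + G₃') = (3:ℝ)⁻¹ • (A + B + C) :=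
  napoleon_inner_general A B C A₁' B₁' C₁' hA₁' hA₁'2 hB₁' hB₁'2 hC₁' hC₁'2 hsideA' hsideB' hsideC'
    G₁' G₂' G₃' hG₁' hG₂' hG₃'
end

section
/- Let A₁, B₁, C₁ be a non-overlapping Napoleon configuration for a nondegenerate triangle ABC in the Euclidean plane, and let G₁, G₂, G₃ be the centroids of A₁BC, AB₁C, ABC₁ respectively. Then the area of triangle G₁G₂G₃ equals one half of the area of triangle ABC plus one sixth of the sum of the areas of the three equilateral triangles: Area(G₁G₂G₃) = (1/2)·Area(ABC) + (1/6)·(Area(A₁BC) + Area(AB₁C) + Area(ABC₁)). -/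
/-!
Write `wedge u v = u₀v₁ - u₁v₀` and `rot` for the quarter turn. The apex of an equilateral
triangle erected on `BC` is `(B + C) / 2 + t • rot (C - B)` with `t ^ 2 = 3 / 4`, and lying on the
side of `BC` opposite to `A` means that `t` and the orientation `wedge (B - A) (C - A)` of `ABC`
have opposite signs. Hence all three apices use the same `t`, and expanding gives
`wedge (G₂ - G₁) (G₃ - G₁) = wedge (B - A) (C - A) / 2 - t (a² + b² + c²) / 6`, whose two terms
have the same sign. Each equilateral triangle has `|wedge| = |t| · side²`, and every triangle's
area is `|wedge|` times the area of a fixed reference triangle, since it is the image of that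
triangle under an affine map.
-/

open EuclideanGeometry AffineSubspace MeasureTheory

noncomputable def triArea (X Y Z : EuclideanSpace ℝ (Fin 2)) : ℝ :=
  (volume (convexHull ℝ {X, Y, Z})).toReal

open Module Pointwise

theorem SameRay.mul_nonneg {k : Type*} [Field k] [LinearOrder k] [IsStrictOrderedRing k]
    {a b : k} (h : SameRay k a b) : 0 ≤ a * b := by
  rcases h with rfl | rfl | ⟨r₁, r₂, hr₁, hr₂, h⟩
  · simp
  · simp
  · have : r₁ * (a * b) = r₂ * (b * b) := by
      rw [← mul_assoc, ← smul_eq_mul r₁ a, h, smul_eq_mul, mul_assoc]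
    nlinarith [mul_self_nonneg b]

theorem AffineSubspace.WOppSide.map_vsub_mul_nonpos {k V P : Type*} [Field k] [LinearOrder k]
    [IsStrictOrderedRing k] [AddCommGroup V] [Module k V] [AddTorsor V P]
    {s : AffineSubspace k P} {x y p : P} (h : s.WOppSide x y) (hp : p ∈ s) (φ : V →ₗ[k] k)
    (hφ : ∀ v ∈ s.direction, φ v = 0) : φ (x -ᵥ p) * φ (y -ᵥ p) ≤ 0 := by
  rcases (wOppSide_iff_exists_left hp).1 h with hx | ⟨q, hq, hray⟩
  · simp [hφ _ (vsub_mem_direction hx hp)]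
  · have := (hray.map φ).mul_nonneg
    rw [← vsub_sub_vsub_cancel_right q y p, map_sub, hφ _ (vsub_mem_direction hq hp)] at this
    linarith

theorem AffineIndependent.basis_det_vsub_ne_zero {k V P : Type*} [Field k] [AddCommGroup V]
    [Module k V] [AddTorsor V P] (b : Basis (Fin 2) k V) {p₀ p₁ p₂ : P}
    (h : AffineIndependent k ![p₀, p₁, p₂]) : b.det ![p₁ -ᵥ p₀, p₂ -ᵥ p₀] ≠ 0 := by
  have hli : LinearIndependent k ![p₁ -ᵥ p₀, p₂ -ᵥ p₀] := by
    have := ((affineIndependent_iff_linearIndependent_vsub k _ 0).1 h).comp _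
      (finSuccAboveEquiv (0 : Fin 3)).injective
    have hfun : (fun i : {i : Fin 3 // i ≠ 0} => ![p₀, p₁, p₂] i -ᵥ ![p₀, p₁, p₂] 0) ∘
        finSuccAboveEquiv 0 = ![p₁ -ᵥ p₀, p₂ -ᵥ p₀] := by
      ext i; fin_cases i <;> rfl
    rwa [hfun] at this
  have : FiniteDimensional k V := b.finiteDimensional_of_finite
  refine (b.is_basis_iff_det.1 ⟨hli, hli.span_eq_top_of_card_eq_finrank' ?_⟩).ne_zero
  simp [finrank_eq_card_basis b]

/-- The triangle is the image of `0, b 0, b 1` under `x + L`, where `L` maps `b` to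
`![y - x, z - x]`. -/
theorem addHaar_convexHull_triple {E : Type*} [NormedAddCommGroup E] [NormedSpace ℝ E]
    [MeasurableSpace E] [BorelSpace E] [FiniteDimensional ℝ E] (μ : Measure E)
    [μ.IsAddHaarMeasure] (b : Basis (Fin 2) ℝ E) (x y z : E) :
    μ (convexHull ℝ {x, y, z}) =
      ENNReal.ofReal |b.det ![y - x, z - x]| * μ (convexHull ℝ {0, b 0, b 1}) := by
  set L := b.constr ℝ ![y - x, z - x]
  have hL : b.det ![y - x, z - x] = LinearMap.det L := by
    have : ![y - x, z - x] = L ∘ b := by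
      ext i; fin_cases i <;> simp [L]
    rw [this, b.det_comp, b.det_self, mul_one]
  have hxyz : ({x, y, z} : Set E) = x +ᵥ L '' {0, b 0, b 1} := by
    simp [Set.image_insert_eq, L, Set.vadd_set_insert]
  rw [hxyz, convexHull_vadd, ← L.image_convexHull, measure_vadd,
    Measure.addHaar_image_linearMap, hL]

theorem abs_sub_eq_abs_add_abs_of_mul_nonpos {α : Type*} [CommRing α] [LinearOrder α]
    [IsStrictOrderedRing α] {a b : α} (h : a * b ≤ 0) :
    |a - b| = |a| + |b| := by
  have hsq : (a - b) ^ 2 = (|a| + |b|) ^ 2 := by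
    rw [add_sq, sq_abs, sq_abs, mul_assoc, ← abs_mul, abs_of_nonpos h]
    ring
  rwa [← sq_abs, sq_eq_sq₀ (abs_nonneg _) (by positivity)] at hsq

theorem eq_of_sq_eq_of_mul_nonpos {α : Type*} [CommRing α] [LinearOrder α]
    [IsStrictOrderedRing α] {a b d : α} (hab : a ^ 2 = b ^ 2) (hd : d ≠ 0)
    (ha : a * d ≤ 0) (hb : b * d ≤ 0) : a = b := by
  rcases sq_eq_sq_iff_eq_or_eq_neg.1 hab with h | rfl
  · exact h
  · have hb₀ : b = 0 := (mul_eq_zero.1 (by linarith : b * d = 0)).resolve_right hd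
    simp [hb₀]

section Plane

local notation "ℝ²" => EuclideanSpace ℝ (Fin 2)

noncomputable def wedge : ℝ² →ₗ[ℝ] ℝ² →ₗ[ℝ] ℝ :=
  LinearMap.mk₂ ℝ (fun u v => u 0 * v 1 - u 1 * v 0)
    (fun _ _ _ => by simp only [PiLp.add_apply]; ring)
    (fun _ _ _ => by simp only [PiLp.smul_apply, smul_eq_mul]; ring)
    (fun _ _ _ => by simp only [PiLp.add_apply]; ring)
    (fun _ _ _ => by simp only [PiLp.smul_apply, smul_eq_mul]; ring)

theorem wedge_apply (u v : ℝ²) : wedge u v = u 0 * v 1 - u 1 * v 0 := rfl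

theorem basisFun_det_eq_wedge (u v : ℝ²) :
    (EuclideanSpace.basisFun (Fin 2) ℝ).toBasis.det ![u, v] = wedge u v := by
  rw [Basis.det_apply, Matrix.det_fin_two, wedge_apply]
  simp only [Basis.toMatrix_apply, Matrix.cons_val_zero, Matrix.cons_val_one,
    OrthonormalBasis.coe_toBasis_repr_apply, EuclideanSpace.basisFun_repr]
  ring

theorem wedge_sub_sub_rotate (A B C : ℝ²) : wedge (C - B) (A - B) = wedge (B - A) (C - A) := by
  simp only [wedge_apply, PiLp.sub_apply]
  ring

noncomputable def rot (v : ℝ²) : ℝ² := !₂[-v 1, v 0]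

@[simp] theorem rot_apply_zero (v : ℝ²) : rot v 0 = -v 1 := rfl

@[simp] theorem rot_apply_one (v : ℝ²) : rot v 1 = v 0 := rfl

theorem dist_sq_eq (P Q : ℝ²) : dist P Q ^ 2 = (P 0 - Q 0) ^ 2 + (P 1 - Q 1) ^ 2 := by
  rw [EuclideanSpace.dist_eq, Real.sq_sqrt (by positivity)]
  simp [Fin.sum_univ_two, Real.dist_eq, sq_abs]

@[simp] theorem midpoint_apply (B C : ℝ²) (i : Fin 2) : midpoint ℝ B C i = (B i + C i) / 2 := by
  rw [midpoint_eq_smul_add]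
  simp only [invOf_eq_inv, smul_add, PiLp.add_apply, PiLp.smul_apply, smul_eq_mul]
  ring

/-- The value `1 / 2` of the reference area is never needed: the Napoleon area identity is
homogeneous in it. -/
theorem triArea_eq_mul_abs_wedge (X Y Z : ℝ²) :
    triArea X Y Z =
      triArea 0 (EuclideanSpace.single 0 1) (EuclideanSpace.single 1 1) *
        |wedge (Y - X) (Z - X)| := by
  have := addHaar_convexHull_triple volume (EuclideanSpace.basisFun (Fin 2) ℝ).toBasis X Y Z
  rw [basisFun_det_eq_wedge] at this
  simp only [triArea, this, ENNReal.toReal_mul, ENNReal.toReal_ofReal (abs_nonneg _),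
    OrthonormalBasis.coe_toBasis, EuclideanSpace.basisFun_apply]
  ring

theorem triArea_rotate (X Y Z : ℝ²) : triArea X Y Z = triArea Y Z X := by
  rw [triArea, triArea, Set.insert_comm X Y, Set.pair_comm X Z]

theorem exists_eq_midpoint_add_smul_rot {B C P : ℝ²} (hBC : B ≠ C) (h : dist P B = dist P C) :
    ∃ t : ℝ, P = midpoint ℝ B C + t • rot (C - B) := by
  have hs : dist B C ^ 2 ≠ 0 := pow_ne_zero 2 (dist_ne_zero.2 hBC)
  have hsq : dist P B ^ 2 = dist P C ^ 2 := by rw [h]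
  rw [dist_sq_eq, dist_sq_eq] at hsq
  rw [dist_sq_eq] at hs
  refine ⟨wedge (C - B) (P - B) / dist B C ^ 2, ?_⟩
  ext i
  fin_cases i <;>
    simp only [Fin.zero_eta, Fin.mk_one, wedge_apply, dist_sq_eq, PiLp.add_apply, PiLp.sub_apply,
      PiLp.smul_apply, midpoint_apply, rot_apply_zero, rot_apply_one, smul_eq_mul] <;>
    field_simp
  · linear_combination (C 0 - B 0) * hsq
  · linear_combination (C 1 - B 1) * hsq

theorem dist_midpoint_add_smul_rot_sq (B C : ℝ²) (t : ℝ) :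
    dist (midpoint ℝ B C + t • rot (C - B)) B ^ 2 = (1 / 4 + t ^ 2) * dist B C ^ 2 := by
  simp only [dist_sq_eq, PiLp.add_apply, PiLp.smul_apply, PiLp.sub_apply, midpoint_apply,
    rot_apply_zero, rot_apply_one, smul_eq_mul]
  ring

theorem exists_apex_of_dist_eq {B C P : ℝ²} (hBC : B ≠ C) (hB : dist P B = dist B C)
    (hC : dist P C = dist B C) :
    ∃ t : ℝ, t ^ 2 = 3 / 4 ∧ P = midpoint ℝ B C + t • rot (C - B) := by
  obtain ⟨t, rfl⟩ := exists_eq_midpoint_add_smul_rot hBC (hB.trans hC.symm)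
  refine ⟨t, ?_, rfl⟩
  have hs : dist B C ^ 2 ≠ 0 := pow_ne_zero 2 (dist_ne_zero.2 hBC)
  have h := dist_midpoint_add_smul_rot_sq B C t
  rw [hB, eq_comm, ← eq_div_iff hs, div_self hs] at h
  linarith

theorem wedge_sub_midpoint_add_smul_rot (B C : ℝ²) (t : ℝ) :
    wedge (B - (midpoint ℝ B C + t • rot (C - B))) (C - (midpoint ℝ B C + t • rot (C - B))) =
      t * dist B C ^ 2 := by
  simp only [wedge_apply, dist_sq_eq, PiLp.add_apply, PiLp.smul_apply, PiLp.sub_apply,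
    midpoint_apply, rot_apply_zero, rot_apply_one, smul_eq_mul]
  ring

theorem triArea_midpoint_add_smul_rot {B C P : ℝ²} {t : ℝ}
    (hP : P = midpoint ℝ B C + t • rot (C - B)) :
    triArea P B C =
      triArea 0 (EuclideanSpace.single 0 1) (EuclideanSpace.single 1 1) *
        (|t| * dist B C ^ 2) := by
  rw [triArea_eq_mul_abs_wedge, hP, wedge_sub_midpoint_add_smul_rot, abs_mul,
    abs_of_nonneg (sq_nonneg (dist B C))]

theorem mul_wedge_nonpos_of_wOppSide {B C P X : ℝ²} {t : ℝ} (hBC : B ≠ C)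
    (hP : P = midpoint ℝ B C + t • rot (C - B)) (h : (affineSpan ℝ {B, C}).WOppSide X P) :
    t * wedge (C - B) (X - B) ≤ 0 := by
  subst hP
  have hline : ∀ v ∈ (affineSpan ℝ {B, C}).direction, wedge (C - B) v = 0 := by
    intro v hv
    rw [direction_affineSpan, vectorSpan_pair, Submodule.mem_span_singleton] at hv
    obtain ⟨r, rfl⟩ := hv
    simp only [wedge_apply, PiLp.smul_apply, vsub_eq_sub, PiLp.sub_apply, smul_eq_mul]
    ring
  have hapex : wedge (C - B) (midpoint ℝ B C + t • rot (C - B) - B) = t * dist B C ^ 2 := by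
    simp only [wedge_apply, dist_sq_eq, PiLp.add_apply, PiLp.smul_apply, PiLp.sub_apply,
      midpoint_apply, rot_apply_zero, rot_apply_one, smul_eq_mul]
    ring
  have := h.map_vsub_mul_nonpos (left_mem_affineSpan_pair ℝ B C) (wedge (C - B)) hline
  rw [vsub_eq_sub, vsub_eq_sub, hapex] at this
  have hs : 0 < dist B C ^ 2 := pow_pos (dist_pos.2 hBC) 2
  nlinarith

theorem wedge_centroids_of_apexes {A B C A₁ B₁ C₁ : ℝ²} {t : ℝ} (ht : t ^ 2 = 3 / 4)
    (hA₁ : A₁ = midpoint ℝ B C + t • rot (C - B)) (hB₁ : B₁ = midpoint ℝ C A + t • rot (A - C))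
    (hC₁ : C₁ = midpoint ℝ A B + t • rot (B - A)) :
    wedge ((3:ℝ)⁻¹ • (A + B₁ + C) - (3:ℝ)⁻¹ • (A₁ + B + C))
        ((3:ℝ)⁻¹ • (A + B + C₁) - (3:ℝ)⁻¹ • (A₁ + B + C)) =
      wedge (B - A) (C - A) / 2 - t * (dist B C ^ 2 + dist C A ^ 2 + dist A B ^ 2) / 6 := by
  subst hA₁ hB₁ hC₁
  simp only [wedge_apply, dist_sq_eq, PiLp.add_apply, PiLp.smul_apply, PiLp.sub_apply,
    midpoint_apply, rot_apply_zero, rot_apply_one, smul_eq_mul]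
  linear_combination ((B 0 - A 0) * (C 1 - A 1) - (B 1 - A 1) * (C 0 - A 0)) / 3 * ht

end Plane

theorem napoleon_outer_area
    (A B C A₁ B₁ C₁ : EuclideanSpace ℝ (Fin 2))
    (hABC : AffineIndependent ℝ ![A, B, C])
    (hA₁ : dist A₁ B = dist B C) (hA₁' : dist A₁ C = dist B C)
    (hB₁ : dist A B₁ = dist A C) (hB₁' : dist B₁ C = dist A C)
    (hC₁ : dist A C₁ = dist A B) (hC₁' : dist B C₁ = dist A B)
    (hsideA : (affineSpan ℝ {B, C}).SOppSide A A₁)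
    (hsideB : (affineSpan ℝ {C, A}).SOppSide B B₁)
    (hsideC : (affineSpan ℝ {A, B}).SOppSide C C₁)
    (G₁ G₂ G₃ : EuclideanSpace ℝ (Fin 2))
    (hG₁ : G₁ = (3:ℝ)⁻¹ • (A₁ + B + C))
    (hG₂ : G₂ = (3:ℝ)⁻¹ • (A + B₁ + C))
    (hG₃ : G₃ = (3:ℝ)⁻¹ • (A + B + C₁)) :
    triArea G₁ G₂ G₃ =
      (1/2) * triArea A B C + (1/6) * (triArea A₁ B C + triArea A B₁ C + triArea A B C₁) := by
  have hD : wedge (B - A) (C - A) ≠ 0 := by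
    simpa [basisFun_det_eq_wedge] using
      hABC.basis_det_vsub_ne_zero (EuclideanSpace.basisFun (Fin 2) ℝ).toBasis
  have hAB : A ≠ B := fun h => hABC.injective.ne (show (0 : Fin 3) ≠ 1 by decide) (by simp [h])
  have hBC : B ≠ C := fun h => hABC.injective.ne (show (1 : Fin 3) ≠ 2 by decide) (by simp [h])
  have hCA : C ≠ A := fun h => hABC.injective.ne (show (2 : Fin 3) ≠ 0 by decide) (by simp [h])
  obtain ⟨a, ha, hA₁a⟩ := exists_apex_of_dist_eq hBC hA₁ hA₁'
  obtain ⟨b, hb, hB₁b⟩ := exists_apex_of_dist_eq (P := B₁) hCA (by rwa [dist_comm C A])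
    (by rwa [dist_comm B₁, dist_comm C A])
  obtain ⟨c, hc, hC₁c⟩ := exists_apex_of_dist_eq (P := C₁) hAB (by rwa [dist_comm])
    (by rwa [dist_comm])
  have hsa := mul_wedge_nonpos_of_wOppSide hBC hA₁a hsideA.wOppSide
  have hsb := mul_wedge_nonpos_of_wOppSide hCA hB₁b hsideB.wOppSide
  have hsc := mul_wedge_nonpos_of_wOppSide hAB hC₁c hsideC.wOppSide
  rw [wedge_sub_sub_rotate] at hsa
  rw [wedge_sub_sub_rotate, wedge_sub_sub_rotate] at hsb
  obtain rfl : b = a := eq_of_sq_eq_of_mul_nonpos (hb.trans ha.symm) hD hsb hsa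
  obtain rfl : c = b := eq_of_sq_eq_of_mul_nonpos (hc.trans hb.symm) hD hsc hsb
  have hS : 0 ≤ dist B C ^ 2 + dist C A ^ 2 + dist A B ^ 2 := by positivity
  subst hG₁ hG₂ hG₃
  rw [triArea_eq_mul_abs_wedge, wedge_centroids_of_apexes ha hA₁a hB₁b hC₁c,
    triArea_eq_mul_abs_wedge A B C, triArea_midpoint_add_smul_rot hA₁a, triArea_rotate A B₁,
    triArea_midpoint_add_smul_rot hB₁b, triArea_rotate A B C₁, triArea_rotate B C₁,
    triArea_midpoint_add_smul_rot hC₁c,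
    abs_sub_eq_abs_add_abs_of_mul_nonpos (by nlinarith [mul_nonpos_of_nonpos_of_nonneg hsa hS])]
  simp only [abs_div, abs_mul, abs_of_nonneg hS, abs_two, abs_of_pos (by norm_num : (0:ℝ) < 6)]
  ring
end

section
/- Let A₁, B₁, C₁ be a non-overlapping Napoleon configuration for a nondegenerate triangle ABC in the Euclidean plane. Let A₂ = (B₁+C₁)/2 be the midpoint of B₁C₁ and B₂ = (C₁+A₁)/2 the midpoint of C₁A₁. Then the triangle A₂B₂C is equilateral: dist A₂ B₂ = dist B₂ C = dist C A₂. -/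
open EuclideanGeometry AffineSubspace MeasureTheory

local notation "E2" => EuclideanSpace ℝ (Fin 2)

private lemma dist_sq_coords (x y : E2) : dist x y ^ 2 = (x 0 - y 0)^2 + (x 1 - y 1)^2 := by
  rw [EuclideanSpace.dist_eq, Real.sq_sqrt (by positivity)]
  simp [Fin.sum_univ_two, Real.dist_eq, sq_abs]

private lemma q_pos {B C : E2} (h : B ≠ C) : 0 < (C 0 - B 0)^2 + (C 1 - B 1)^2 := by
  rcases (show B 0 ≠ C 0 ∨ B 1 ≠ C 1 by
    by_contra h'; push_neg at h'; exact h (by ext i; fin_cases i <;> simp [h'.1, h'.2])) with h0 | h0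
  · have : (C 0 - B 0) ≠ 0 := fun e => h0 (by linarith [sub_eq_zero.mp e])
    nlinarith [pow_two_pos_of_ne_zero this, sq_nonneg (C 1 - B 1)]
  · have : (C 1 - B 1) ≠ 0 := fun e => h0 (by linarith [sub_eq_zero.mp e])
    nlinarith [pow_two_pos_of_ne_zero this, sq_nonneg (C 0 - B 0)]

private lemma mem_line_iff (B C P : E2) :
    P ∈ affineSpan ℝ ({B, C} : Set E2) ↔ ∃ r : ℝ, r • (C - B) = P - B := by
  have h : P = (P - B) +ᵥ B := by simp
  rw [h, vadd_left_mem_affineSpan_pair]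
  simp [vsub_eq_sub, vadd_eq_add]

set_option maxHeartbeats 2000000 in
private lemma line_cross {B C : E2} (hBC : B ≠ C) (P : E2) :
    P ∈ affineSpan ℝ ({B, C} : Set E2) ↔
      (C 0 - B 0) * (P 1 - B 1) - (C 1 - B 1) * (P 0 - B 0) = 0 := by
  rw [mem_line_iff]
  constructor
  · rintro ⟨r, hr⟩
    have h0 : (r • (C - B)) 0 = (P - B) 0 := by rw [hr]
    have h1 : (r • (C - B)) 1 = (P - B) 1 := by rw [hr]
    simp only [PiLp.smul_apply, PiLp.sub_apply, smul_eq_mul] at h0 h1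
    linear_combination (C 1 - B 1) * h0 - (C 0 - B 0) * h1
  · intro h
    have hq := q_pos hBC
    refine ⟨((P 0 - B 0) * (C 0 - B 0) + (P 1 - B 1) * (C 1 - B 1)) /
      ((C 0 - B 0)^2 + (C 1 - B 1)^2), ?_⟩
    have g0 : ((((P 0 - B 0) * (C 0 - B 0) + (P 1 - B 1) * (C 1 - B 1)) /
        ((C 0 - B 0)^2 + (C 1 - B 1)^2) : ℝ) • (C - B)) 0 = (P - B) 0 := by
      simp only [PiLp.smul_apply, PiLp.sub_apply, smul_eq_mul]
      rw [div_mul_eq_mul_div, div_eq_iff (ne_of_gt hq)]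
      linear_combination (C 1 - B 1) * h
    have g1 : ((((P 0 - B 0) * (C 0 - B 0) + (P 1 - B 1) * (C 1 - B 1)) /
        ((C 0 - B 0)^2 + (C 1 - B 1)^2) : ℝ) • (C - B)) 1 = (P - B) 1 := by
      simp only [PiLp.smul_apply, PiLp.sub_apply, smul_eq_mul]
      rw [div_mul_eq_mul_div, div_eq_iff (ne_of_gt hq)]
      linear_combination (-(C 0 - B 0)) * h
    ext i; fin_cases i
    · exact g0
    · exact g1

private lemma cross_mul_neg {B C : E2} (hBC : B ≠ C) {x y : E2}
    (h : (affineSpan ℝ ({B, C} : Set E2)).SOppSide x y) :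
    ((C 0 - B 0) * (x 1 - B 1) - (C 1 - B 1) * (x 0 - B 0)) *
    ((C 0 - B 0) * (y 1 - B 1) - (C 1 - B 1) * (y 0 - B 0)) < 0 := by
  obtain ⟨⟨p₁, hp₁, p₂, hp₂, hray⟩, hx, hy⟩ := h
  have hcx : (C 0 - B 0) * (x 1 - B 1) - (C 1 - B 1) * (x 0 - B 0) ≠ 0 :=
    fun e => hx ((line_cross hBC x).mpr e)
  have hcy : (C 0 - B 0) * (y 1 - B 1) - (C 1 - B 1) * (y 0 - B 0) ≠ 0 :=
    fun e => hy ((line_cross hBC y).mpr e)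
  have hcp₁ := (line_cross hBC p₁).mp hp₁
  have hcp₂ := (line_cross hBC p₂).mp hp₂
  have hv1 : x -ᵥ p₁ ≠ 0 := fun e => hx (by rwa [vsub_eq_zero_iff_eq.mp e])
  have hv2 : p₂ -ᵥ y ≠ 0 := fun e => hy (by rwa [← (vsub_eq_zero_iff_eq.mp e)])
  obtain ⟨r₁, r₂, hr₁, hr₂, heq⟩ := hray.exists_pos hv1 hv2
  have h0 : (r₁ • (x -ᵥ p₁)) 0 = (r₂ • (p₂ -ᵥ y)) 0 := by rw [heq]
  have h1 : (r₁ • (x -ᵥ p₁)) 1 = (r₂ • (p₂ -ᵥ y)) 1 := by rw [heq]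
  simp only [vsub_eq_sub, PiLp.smul_apply, PiLp.sub_apply, smul_eq_mul] at h0 h1
  have key : r₁ * ((C 0 - B 0) * (x 1 - B 1) - (C 1 - B 1) * (x 0 - B 0))
      = r₂ * (-((C 0 - B 0) * (y 1 - B 1) - (C 1 - B 1) * (y 0 - B 0))) := by
    linear_combination (-(C 1 - B 1)) * h0 + (C 0 - B 0) * h1 + r₁ * hcp₁ + r₂ * hcp₂
  have h2 : r₂ * (((C 0 - B 0) * (x 1 - B 1) - (C 1 - B 1) * (x 0 - B 0)) *
      ((C 0 - B 0) * (y 1 - B 1) - (C 1 - B 1) * (y 0 - B 0)))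
      = -(r₁ * ((C 0 - B 0) * (x 1 - B 1) - (C 1 - B 1) * (x 0 - B 0))^2) := by
    linear_combination ((C 0 - B 0) * (x 1 - B 1) - (C 1 - B 1) * (x 0 - B 0)) * key
  nlinarith [h2, hr₂, mul_pos hr₁ (pow_two_pos_of_ne_zero hcx)]

private lemma apex {B C : E2} (hBC : B ≠ C) (P : E2)
    (h1 : dist P B = dist B C) (h2 : dist P C = dist B C) :
    ∃ t : ℝ, t ^ 2 = 3/4 ∧
      P 0 = (B 0 + C 0)/2 - t * (C 1 - B 1) ∧
      P 1 = (B 1 + C 1)/2 + t * (C 0 - B 0) ∧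
      (C 0 - B 0) * (P 1 - B 1) - (C 1 - B 1) * (P 0 - B 0)
        = t * ((C 0 - B 0)^2 + (C 1 - B 1)^2) := by
  have hq := q_pos hBC
  have hqne : ((C 0 - B 0)^2 + (C 1 - B 1)^2) ≠ 0 := ne_of_gt hq
  have e1 : (P 0 - B 0)^2 + (P 1 - B 1)^2 = (B 0 - C 0)^2 + (B 1 - C 1)^2 := by
    rw [← dist_sq_coords, ← dist_sq_coords, h1]
  have e2 : (P 0 - C 0)^2 + (P 1 - C 1)^2 = (B 0 - C 0)^2 + (B 1 - C 1)^2 := by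
    rw [← dist_sq_coords, ← dist_sq_coords, h2]
  have perp : (P 0 - (B 0 + C 0)/2) * (C 0 - B 0) + (P 1 - (B 1 + C 1)/2) * (C 1 - B 1) = 0 := by
    linear_combination (e1 - e2) / 2
  have hnorm : (P 0 - (B 0 + C 0)/2)^2 + (P 1 - (B 1 + C 1)/2)^2
      = 3/4 * ((C 0 - B 0)^2 + (C 1 - B 1)^2) := by
    linear_combination e1 - perp
  refine ⟨((C 0 - B 0) * (P 1 - (B 1 + C 1)/2) - (C 1 - B 1) * (P 0 - (B 0 + C 0)/2)) /
      ((C 0 - B 0)^2 + (C 1 - B 1)^2), ?_, ?_, ?_, ?_⟩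
  · rw [div_pow, div_eq_iff (by positivity)]
    linear_combination ((C 0 - B 0)^2 + (C 1 - B 1)^2) * hnorm
      - ((P 0 - (B 0 + C 0)/2) * (C 0 - B 0) + (P 1 - (B 1 + C 1)/2) * (C 1 - B 1)) * perp
  · have c1 : ((C 0 - B 0) * (P 1 - (B 1 + C 1)/2) - (C 1 - B 1) * (P 0 - (B 0 + C 0)/2)) /
        ((C 0 - B 0)^2 + (C 1 - B 1)^2) * (C 1 - B 1) = (B 0 + C 0)/2 - P 0 := by
      rw [div_mul_eq_mul_div, div_eq_iff hqne]
      linear_combination (C 0 - B 0) * perp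
    linarith [c1]
  · have c2 : ((C 0 - B 0) * (P 1 - (B 1 + C 1)/2) - (C 1 - B 1) * (P 0 - (B 0 + C 0)/2)) /
        ((C 0 - B 0)^2 + (C 1 - B 1)^2) * (C 0 - B 0) = P 1 - (B 1 + C 1)/2 := by
      rw [div_mul_eq_mul_div, div_eq_iff hqne]
      linear_combination (-(C 1 - B 1)) * perp
    linarith [c2]
  · rw [div_mul_cancel₀ _ hqne]
    ring

set_option maxHeartbeats 2000000 in
theorem napoleon_midpoint_equilateral
    (A B C A₁ B₁ C₁ : EuclideanSpace ℝ (Fin 2))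
    (hABC : AffineIndependent ℝ ![A, B, C])
    (hA₁ : dist A₁ B = dist B C) (hA₁' : dist A₁ C = dist B C)
    (hB₁ : dist A B₁ = dist A C) (hB₁' : dist B₁ C = dist A C)
    (hC₁ : dist A C₁ = dist A B) (hC₁' : dist B C₁ = dist A B)
    (hsideA : (affineSpan ℝ {B, C}).SOppSide A A₁)
    (hsideB : (affineSpan ℝ {C, A}).SOppSide B B₁)
    (hsideC : (affineSpan ℝ {A, B}).SOppSide C C₁)
    (A₂ B₂ : EuclideanSpace ℝ (Fin 2))
    (hA₂ : A₂ = (2:ℝ)⁻¹ • (B₁ + C₁))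
    (hB₂ : B₂ = (2:ℝ)⁻¹ • (C₁ + A₁)) :
    dist A₂ B₂ = dist B₂ C ∧ dist B₂ C = dist C A₂ := by
  have hBC : B ≠ C := by
    have := hABC.injective.ne (show (1:Fin 3) ≠ 2 by decide)
    simpa using this
  have hCA : C ≠ A := by
    have := hABC.injective.ne (show (2:Fin 3) ≠ 0 by decide)
    simpa using this
  have hAB : A ≠ B := by
    have := hABC.injective.ne (show (0:Fin 3) ≠ 1 by decide)
    simpa using this
  obtain ⟨ta, hta, ha0, ha1, hacr⟩ := apex hBC A₁ hA₁ hA₁'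
  obtain ⟨tb, htb, hb0, hb1, hbcr⟩ := apex hCA B₁
    (by rw [hB₁']; exact dist_comm A C) (by rw [dist_comm B₁ A, hB₁, dist_comm])
  obtain ⟨tc, htc, hc0, hc1, hccr⟩ := apex hAB C₁
    (by rw [dist_comm C₁ A, hC₁]) (by rw [dist_comm C₁ B, hC₁'])
  have sA := cross_mul_neg hBC hsideA
  have sB := cross_mul_neg hCA hsideB
  have sC := cross_mul_neg hAB hsideC
  rw [hacr] at sA
  rw [hbcr] at sB
  rw [hccr] at sC
  have qBC := q_pos hBC
  have qCA := q_pos hCA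
  have qAB := q_pos hAB
  -- common D
  have eB : (A 0 - C 0) * (B 1 - C 1) - (A 1 - C 1) * (B 0 - C 0)
      = (C 0 - B 0) * (A 1 - B 1) - (C 1 - B 1) * (A 0 - B 0) := by ring
  have eC : (B 0 - A 0) * (C 1 - A 1) - (B 1 - A 1) * (C 0 - A 0)
      = (C 0 - B 0) * (A 1 - B 1) - (C 1 - B 1) * (A 0 - B 0) := by ring
  rw [eB] at sB
  rw [eC] at sC
  have hDta : ((C 0 - B 0) * (A 1 - B 1) - (C 1 - B 1) * (A 0 - B 0)) * ta < 0 := by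
    by_contra hcon
    push_neg at hcon
    have h2 : 0 ≤ ((C 0 - B 0) * (A 1 - B 1) - (C 1 - B 1) * (A 0 - B 0)) * ta * ((C 0 - B 0)^2 + (C 1 - B 1)^2) :=
      mul_nonneg hcon (le_of_lt qBC)
    have h3 : ((C 0 - B 0) * (A 1 - B 1) - (C 1 - B 1) * (A 0 - B 0)) * ta * ((C 0 - B 0)^2 + (C 1 - B 1)^2)
        = ((C 0 - B 0) * (A 1 - B 1) - (C 1 - B 1) * (A 0 - B 0)) * (ta * ((C 0 - B 0)^2 + (C 1 - B 1)^2)) := by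
      ring
    linarith [sA]
  have hDtb : ((C 0 - B 0) * (A 1 - B 1) - (C 1 - B 1) * (A 0 - B 0)) * tb < 0 := by
    by_contra hcon
    push_neg at hcon
    have h2 : 0 ≤ ((C 0 - B 0) * (A 1 - B 1) - (C 1 - B 1) * (A 0 - B 0)) * tb * ((A 0 - C 0)^2 + (A 1 - C 1)^2) :=
      mul_nonneg hcon (le_of_lt qCA)
    have h3 : ((C 0 - B 0) * (A 1 - B 1) - (C 1 - B 1) * (A 0 - B 0)) * tb * ((A 0 - C 0)^2 + (A 1 - C 1)^2)
        = ((C 0 - B 0) * (A 1 - B 1) - (C 1 - B 1) * (A 0 - B 0)) * (tb * ((A 0 - C 0)^2 + (A 1 - C 1)^2)) := by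
      ring
    linarith [sB]
  have hDtc : ((C 0 - B 0) * (A 1 - B 1) - (C 1 - B 1) * (A 0 - B 0)) * tc < 0 := by
    by_contra hcon
    push_neg at hcon
    have h2 : 0 ≤ ((C 0 - B 0) * (A 1 - B 1) - (C 1 - B 1) * (A 0 - B 0)) * tc * ((B 0 - A 0)^2 + (B 1 - A 1)^2) :=
      mul_nonneg hcon (le_of_lt qAB)
    have h3 : ((C 0 - B 0) * (A 1 - B 1) - (C 1 - B 1) * (A 0 - B 0)) * tc * ((B 0 - A 0)^2 + (B 1 - A 1)^2)
        = ((C 0 - B 0) * (A 1 - B 1) - (C 1 - B 1) * (A 0 - B 0)) * (tc * ((B 0 - A 0)^2 + (B 1 - A 1)^2)) := by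
      ring
    linarith [sC]
  have htab : tb = ta := by
    rcases mul_eq_zero.mp (show (ta - tb) * (ta + tb) = 0 by linear_combination hta - htb)
      with h | h
    · linarith [sub_eq_zero.mp h]
    · exfalso
      have e : tb = -ta := by linarith
      have : ((C 0 - B 0) * (A 1 - B 1) - (C 1 - B 1) * (A 0 - B 0)) * tb
          = -(((C 0 - B 0) * (A 1 - B 1) - (C 1 - B 1) * (A 0 - B 0)) * ta) := by
        rw [e]; ring
      linarith
  have htac : tc = ta := by
    rcases mul_eq_zero.mp (show (ta - tc) * (ta + tc) = 0 by linear_combination hta - htc)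
      with h | h
    · linarith [sub_eq_zero.mp h]
    · exfalso
      have e : tc = -ta := by linarith
      have : ((C 0 - B 0) * (A 1 - B 1) - (C 1 - B 1) * (A 0 - B 0)) * tc
          = -(((C 0 - B 0) * (A 1 - B 1) - (C 1 - B 1) * (A 0 - B 0)) * ta) := by
        rw [e]; ring
      linarith
  rw [htab] at hb0 hb1
  rw [htac] at hc0 hc1
  have hA₂0 : A₂ 0 = (B₁ 0 + C₁ 0)/2 := by rw [hA₂]; simp; ring
  have hA₂1 : A₂ 1 = (B₁ 1 + C₁ 1)/2 := by rw [hA₂]; simp; ring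
  have hB₂0 : B₂ 0 = (C₁ 0 + A₁ 0)/2 := by rw [hB₂]; simp; ring
  have hB₂1 : B₂ 1 = (C₁ 1 + A₁ 1)/2 := by rw [hB₂]; simp; ring
  have key1 : dist A₂ B₂ ^ 2 = dist B₂ C ^ 2 := by
    rw [dist_sq_coords, dist_sq_coords, hA₂0, hA₂1, hB₂0, hB₂1, ha0, ha1, hb0, hb1, hc0, hc1]
    linear_combination ((3/4) * (C 1)^2 + (3/4) * (C 0)^2 - (B 1) * (C 1) + (1/4) * (B 1)^2
      - (B 0) * (C 0) + (1/4) * (B 0)^2 - (1/2) * (A 1) * (C 1) + (1/2) * (A 1) * (B 1)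
      - (1/2) * (A 0) * (C 0) + (1/2) * (A 0) * (B 0)) * hta
  have key2 : dist B₂ C ^ 2 = dist C A₂ ^ 2 := by
    rw [dist_sq_coords, dist_sq_coords, hA₂0, hA₂1, hB₂0, hB₂1, ha0, ha1, hb0, hb1, hc0, hc1]
    linear_combination ((1/2) * (B 1) * (C 1) - (1/4) * (B 1)^2 + (1/2) * (B 0) * (C 0)
      - (1/4) * (B 0)^2 - (1/2) * (A 1) * (C 1) + (1/4) * (A 1)^2 - (1/2) * (A 0) * (C 0)
      + (1/4) * (A 0)^2) * hta
  constructor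
  · calc dist A₂ B₂ = √(dist A₂ B₂ ^ 2) := (Real.sqrt_sq dist_nonneg).symm
      _ = √(dist B₂ C ^ 2) := by rw [key1]
      _ = dist B₂ C := Real.sqrt_sq dist_nonneg
  · calc dist B₂ C = √(dist B₂ C ^ 2) := (Real.sqrt_sq dist_nonneg).symm
      _ = √(dist C A₂ ^ 2) := by rw [key2]
      _ = dist C A₂ := Real.sqrt_sq dist_nonneg
end

section
/- Let A₁, B₁, C₁ be a non-overlapping Napoleon configuration for a nondegenerate triangle ABC in the Euclidean plane, and let A₂, B₂, C₂ be the midpoints of B₁C₁, C₁A₁, A₁B₁ respectively. Then all three triangles A₂B₂C, AB₂C₂ and A₂BC₂ are equilateral. -/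
open EuclideanGeometry AffineSubspace MeasureTheory

/-!
Identify the plane with `ℂ`. The apex `r` of an equilateral triangle erected on a segment `pq` is
`r = p + ζ (q - p)` with `ζ ^ 2 - ζ + 1 = 0`, i.e. `ζ = e^{± iπ/3}`, and the sign of `Im ζ` is
opposite to the orientation of `pqx` for any `x` on the other side of `pq`. Since the triangles
`BCA`, `CAB`, `ABC` have the same orientation, the three outer triangles come with the same `ζ`.
Then each of the three midpoint triangles has a vertex `w` with `x - w = ζ (y - w)` for the other
two, a polynomial identity modulo `ζ ^ 2 - ζ + 1`; as `|ζ| = |ζ - 1| = 1`, such a triangle is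
equilateral.
-/

open Complex ComplexConjugate

lemma AffineEquiv.sOppSide_affineSpan_pair_map {R V V' P P' : Type*} [CommRing R] [PartialOrder R]
    [IsStrictOrderedRing R] [AddCommGroup V] [Module R V] [AddTorsor V P] [AddCommGroup V']
    [Module R V'] [AddTorsor V' P'] (f : P ≃ᵃ[R] P') {p q x y : P}
    (h : line[R, p, q].SOppSide x y) : line[R, f p, f q].SOppSide (f x) (f y) := by
  have h' := f.sOppSide_map_iff.2 h
  rwa [AffineSubspace.map_span, Set.image_pair] at h'

/-- Twice the oriented area of the triangle `p q z`. -/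
def signedArea (p q z : ℂ) : ℝ := (conj (q - p) * (z - p)).im

section SignedArea

variable {p q x y z : ℂ}

lemma signedArea_rotate (p q z : ℂ) : signedArea p q z = signedArea q z p := by
  simp only [signedArea, mul_im, conj_re, conj_im, sub_re, sub_im]
  ring

lemma signedArea_lineMap (p q x y : ℂ) (t : ℝ) :
    signedArea p q (AffineMap.lineMap x y t) =
      (1 - t) * signedArea p q x + t * signedArea p q y := by
  simp only [signedArea, map_sub, AffineMap.lineMap_apply_module, real_smul, ofReal_sub, ofReal_one,
    mul_im, sub_re, conj_re, sub_im, add_im, one_re, ofReal_re, one_im, ofReal_im, sub_self, zero_mul,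
    add_zero, conj_im, sub_neg_eq_add, add_re, mul_re, sub_zero]
  ring

lemma signedArea_eq_zero_iff (hpq : p ≠ q) : signedArea p q z = 0 ↔ z ∈ line[ℝ, p, q] := by
  rw [mem_affineSpan_pair_iff_exists_lineMap_eq]
  constructor
  · intro h
    have hw : q - p ≠ 0 := sub_ne_zero.2 hpq.symm
    have hu : conj (q - p) * (z - p) = ((conj (q - p) * (z - p)).re : ℂ) :=
      Complex.ext (by simp) (by simpa [signedArea] using h)
    refine ⟨(conj (q - p) * (z - p)).re / normSq (q - p), ?_⟩
    rw [AffineMap.lineMap_apply_module, real_smul, real_smul]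
    push_cast
    rw [← hu, ← mul_conj, mul_comm (q - p), mul_div_mul_left _ _ ((map_ne_zero _).2 hw)]
    field_simp
    ring
  · rintro ⟨r, rfl⟩
    rw [signedArea_lineMap]
    simp only [signedArea, sub_self, mul_zero, zero_im, mul_im, conj_re, conj_im]
    ring

lemma signedArea_mul_neg_of_sOppSide (hpq : p ≠ q) (h : line[ℝ, p, q].SOppSide x y) :
    signedArea p q x * signedArea p q y < 0 := by
  obtain ⟨hxy, hx, hy⟩ := h
  obtain ⟨_, hm, t, ⟨ht₀, ht₁⟩, rfl⟩ := AffineSubspace.wOppSide_iff_exists_wbtw.1 hxy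
  rw [← signedArea_eq_zero_iff hpq] at hx hy hm
  rw [signedArea_lineMap] at hm
  have ht₀' : t ≠ 0 := by rintro rfl; simp_all
  have key : (1 - t) * (signedArea p q x * signedArea p q y) = -(t * signedArea p q y ^ 2) := by
    linear_combination signedArea p q y * hm
  have hpos : 0 < t * signedArea p q y ^ 2 := mul_pos (ht₀.lt_of_ne' ht₀') (sq_pos_of_ne_zero hy)
  exact neg_of_mul_neg_right (key ▸ neg_neg_of_pos hpos) (sub_nonneg.2 ht₁)

lemma signedArea_of_sub_eq_mul {ζ : ℂ} (h : z - p = ζ * (q - p)) :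
    signedArea p q z = ζ.im * normSq (q - p) := by
  rw [signedArea, h, mul_left_comm, ← normSq_eq_conj_mul_self, im_mul_ofReal]

end SignedArea

section SixthRoot

variable {ζ ξ : ℂ}

lemma norm_eq_one_of_sq_sub_add_one_eq_zero (hζ : ζ ^ 2 - ζ + 1 = 0) : ‖ζ‖ = 1 :=
  norm_eq_one_of_pow_eq_one (n := 6) (by linear_combination (ζ ^ 4 + ζ ^ 3 - ζ - 1) * hζ)
    (by norm_num)

lemma norm_sub_one_eq_one_of_sq_sub_add_one_eq_zero (hζ : ζ ^ 2 - ζ + 1 = 0) : ‖ζ - 1‖ = 1 := by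
  rw [show ζ - 1 = ζ ^ 2 by linear_combination -hζ, norm_pow,
    norm_eq_one_of_sq_sub_add_one_eq_zero hζ, one_pow]

lemma sq_sub_add_one_eq_zero_of_norm_eq_one (h₀ : ‖ζ‖ = 1) (h₁ : ‖ζ - 1‖ = 1) :
    ζ ^ 2 - ζ + 1 = 0 := by
  have e₀ := congrArg (· ^ 2) h₀
  have e₁ := congrArg (· ^ 2) h₁
  simp only [← normSq_eq_norm_sq, normSq_apply, sub_re, sub_im, one_re, one_im] at e₀ e₁
  have hre : ζ.re = 1 / 2 := by linear_combination (e₀ - e₁) / 2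
  apply Complex.ext
  · simp only [pow_two, sub_re, add_re, mul_re, one_re, zero_re]
    linear_combination -e₀ + 2 * ζ.re * hre
  · simp only [pow_two, sub_im, add_im, mul_im, one_im, zero_im]
    linear_combination 2 * ζ.im * hre

lemma eq_of_sq_sub_add_one_eq_zero {s : ℝ} (hζ : ζ ^ 2 - ζ + 1 = 0) (hξ : ξ ^ 2 - ξ + 1 = 0)
    (hsζ : s * ζ.im < 0) (hsξ : s * ξ.im < 0) : ζ = ξ := by
  rcases mul_eq_zero.1 (show (ζ - ξ) * (ζ + ξ - 1) = 0 by linear_combination hζ - hξ) with h | h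
  · exact sub_eq_zero.1 h
  · have him : ζ.im + ξ.im = 0 := by simpa using congrArg Complex.im h
    linarith [congrArg (s * ·) him]

lemma dist_eq_of_sub_eq_mul {x y w : ℂ} (hζ : ζ ^ 2 - ζ + 1 = 0) (h : x - w = ζ * (y - w)) :
    dist x y = dist y w ∧ dist y w = dist w x := by
  simp only [dist_eq]
  constructor
  · rw [show x - y = (ζ - 1) * (y - w) by linear_combination h, norm_mul,
      norm_sub_one_eq_one_of_sq_sub_add_one_eq_zero hζ, one_mul]
  · rw [norm_sub_rev w, h, norm_mul, norm_eq_one_of_sq_sub_add_one_eq_zero hζ, one_mul]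

end SixthRoot

lemma exists_sub_eq_mul_of_dist_eq_of_sOppSide {p q r x : ℂ} (h₁ : dist r p = dist p q)
    (h₂ : dist r q = dist p q) (hs : line[ℝ, p, q].SOppSide x r) :
    ∃ ζ : ℂ, ζ ^ 2 - ζ + 1 = 0 ∧ r - p = ζ * (q - p) ∧ signedArea p q x * ζ.im < 0 := by
  have hpq : p ≠ q := by
    rintro rfl
    rw [dist_self, dist_eq_zero] at h₁
    exact hs.right_notMem (h₁ ▸ left_mem_affineSpan_pair ℝ p p)
  have hw : q - p ≠ 0 := sub_ne_zero.2 hpq.symm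
  have hd : dist p q ≠ 0 := dist_ne_zero.2 hpq
  set ζ := (r - p) / (q - p)
  have hr : r - p = ζ * (q - p) := (div_mul_cancel₀ _ hw).symm
  have hζ : ζ ^ 2 - ζ + 1 = 0 := by
    apply sq_sub_add_one_eq_zero_of_norm_eq_one
    · rw [norm_div, ← dist_eq, ← dist_eq, h₁, dist_comm q, div_self hd]
    · rw [show ζ - 1 = (r - q) / (q - p) by rw [eq_div_iff hw]; linear_combination -hr,
        norm_div, ← dist_eq, ← dist_eq, h₂, dist_comm q, div_self hd]
  refine ⟨ζ, hζ, hr, neg_of_mul_neg_left ?_ (normSq_nonneg (q - p))⟩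
  simpa only [signedArea_of_sub_eq_mul hr, mul_assoc] using signedArea_mul_neg_of_sOppSide hpq hs

lemma outer_napoleon_midpoint_rotations {ζ a b c a₁ b₁ c₁ : ℂ} (hζ : ζ ^ 2 - ζ + 1 = 0)
    (ha₁ : a₁ - b = ζ * (c - b)) (hb₁ : b₁ - c = ζ * (a - c)) (hc₁ : c₁ - a = ζ * (b - a)) :
    (2 : ℝ)⁻¹ • (b₁ + c₁) - c = ζ * ((2 : ℝ)⁻¹ • (c₁ + a₁) - c) ∧
    a - (2 : ℝ)⁻¹ • (a₁ + b₁) = ζ * ((2 : ℝ)⁻¹ • (c₁ + a₁) - (2 : ℝ)⁻¹ • (a₁ + b₁)) ∧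
    (2 : ℝ)⁻¹ • (b₁ + c₁) - (2 : ℝ)⁻¹ • (a₁ + b₁) = ζ * (b - (2 : ℝ)⁻¹ • (a₁ + b₁)) := by
  obtain rfl := eq_add_of_sub_eq ha₁
  obtain rfl := eq_add_of_sub_eq hb₁
  obtain rfl := eq_add_of_sub_eq hc₁
  simp only [real_smul, ofReal_inv, ofReal_ofNat]
  refine ⟨?_, ?_, ?_⟩
  · linear_combination (a - c) / 2 * hζ
  · linear_combination (2 * a - b - c) / 2 * hζ
  · linear_combination (a - b) / 2 * hζ

theorem napoleon_three_midpoint_triangles_equilateral_general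
    (A B C A₁ B₁ C₁ : EuclideanSpace ℝ (Fin 2))
    (hA₁ : dist A₁ B = dist B C) (hA₁' : dist A₁ C = dist B C)
    (hB₁ : dist A B₁ = dist A C) (hB₁' : dist B₁ C = dist A C)
    (hC₁ : dist A C₁ = dist A B) (hC₁' : dist B C₁ = dist A B)
    (hsideA : (affineSpan ℝ {B, C}).SOppSide A A₁)
    (hsideB : (affineSpan ℝ {C, A}).SOppSide B B₁)
    (hsideC : (affineSpan ℝ {A, B}).SOppSide C C₁)
    (A₂ B₂ C₂ : EuclideanSpace ℝ (Fin 2))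
    (hA₂ : A₂ = (2:ℝ)⁻¹ • (B₁ + C₁))
    (hB₂ : B₂ = (2:ℝ)⁻¹ • (C₁ + A₁))
    (hC₂ : C₂ = (2:ℝ)⁻¹ • (A₁ + B₁)) :
    (dist A₂ B₂ = dist B₂ C ∧ dist B₂ C = dist C A₂) ∧
    (dist A B₂ = dist B₂ C₂ ∧ dist B₂ C₂ = dist C₂ A) ∧
    (dist A₂ B = dist B C₂ ∧ dist B C₂ = dist C₂ A₂) := by
  let e : EuclideanSpace ℝ (Fin 2) ≃ₗᵢ[ℝ] ℂ := Complex.orthonormalBasisOneI.repr.symm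
  have apex {p q r x} (h₁ : dist r p = dist p q) (h₂ : dist r q = dist p q)
      (hs : line[ℝ, p, q].SOppSide x r) :=
    exists_sub_eq_mul_of_dist_eq_of_sOppSide (p := e p) (q := e q) (r := e r) (x := e x)
      (by simpa only [e.dist_map]) (by simpa only [e.dist_map])
      (e.toLinearEquiv.toAffineEquiv.sOppSide_affineSpan_pair_map hs)
  obtain ⟨ζ, hζ, ha₁, ha⟩ := apex hA₁ hA₁' hsideA
  obtain ⟨ζ', hζ', hb₁, hb⟩ :=
    apex (by rw [hB₁', dist_comm A]) (by rw [dist_comm, hB₁, dist_comm]) hsideB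
  obtain ⟨ζ'', hζ'', hc₁, hc⟩ := apex (by rw [dist_comm, hC₁]) (by rw [dist_comm, hC₁']) hsideC
  rw [← signedArea_rotate] at ha
  rw [← signedArea_rotate, ← signedArea_rotate] at hb
  obtain rfl : ζ = ζ' := eq_of_sq_sub_add_one_eq_zero hζ hζ' ha hb
  obtain rfl : ζ = ζ'' := eq_of_sq_sub_add_one_eq_zero hζ hζ'' ha hc
  obtain ⟨h₁, h₂, h₃⟩ := outer_napoleon_midpoint_rotations hζ ha₁ hb₁ hc₁
  subst hA₂ hB₂ hC₂
  simp only [← e.dist_map, map_smul, map_add]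
  exact ⟨dist_eq_of_sub_eq_mul hζ h₁, dist_eq_of_sub_eq_mul hζ h₂, dist_eq_of_sub_eq_mul hζ h₃⟩

theorem napoleon_three_midpoint_triangles_equilateral
    (A B C A₁ B₁ C₁ : EuclideanSpace ℝ (Fin 2))
    (hABC : AffineIndependent ℝ ![A, B, C])
    (hA₁ : dist A₁ B = dist B C) (hA₁' : dist A₁ C = dist B C)
    (hB₁ : dist A B₁ = dist A C) (hB₁' : dist B₁ C = dist A C)
    (hC₁ : dist A C₁ = dist A B) (hC₁' : dist B C₁ = dist A B)
    (hsideA : (affineSpan ℝ {B, C}).SOppSide A A₁)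
    (hsideB : (affineSpan ℝ {C, A}).SOppSide B B₁)
    (hsideC : (affineSpan ℝ {A, B}).SOppSide C C₁)
    (A₂ B₂ C₂ : EuclideanSpace ℝ (Fin 2))
    (hA₂ : A₂ = (2:ℝ)⁻¹ • (B₁ + C₁))
    (hB₂ : B₂ = (2:ℝ)⁻¹ • (C₁ + A₁))
    (hC₂ : C₂ = (2:ℝ)⁻¹ • (A₁ + B₁)) :
    (dist A₂ B₂ = dist B₂ C ∧ dist B₂ C = dist C A₂) ∧
    (dist A B₂ = dist B₂ C₂ ∧ dist B₂ C₂ = dist C₂ A) ∧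
    (dist A₂ B = dist B C₂ ∧ dist B C₂ = dist C₂ A₂) :=
  napoleon_three_midpoint_triangles_equilateral_general A B C A₁ B₁ C₁ hA₁ hA₁' hB₁ hB₁' hC₁ hC₁'
    hsideA hsideB hsideC A₂ B₂ C₂ hA₂ hB₂ hC₂
end

section
/- Let A₁, B₁, C₁ be a non-overlapping Napoleon configuration for a nondegenerate triangle ABC in the Euclidean plane. Then the centroid of the triangle A₁B₁C₁ coincides with the centroid G = (A+B+C)/3 of triangle ABC; consequently, if A₂, B₂, C₂ are the midpoints of B₁C₁, C₁A₁, A₁B₁, the centroid of triangle A₂B₂C₂ also equals G. -/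
open EuclideanGeometry AffineSubspace MeasureTheory

section NapoleonAux

/-- squared distance in the Euclidean plane, coordinatewise -/
private lemma napoleon_dist_sq (x y : EuclideanSpace ℝ (Fin 2)) :
    dist x y ^ 2 = (x 0 - y 0)^2 + (x 1 - y 1)^2 := by
  rw [EuclideanSpace.dist_eq, Real.sq_sqrt (by positivity)]
  simp [Fin.sum_univ_two, Real.dist_eq, sq_abs]

/-- a vector with vanishing cross product against a nonzero vector is a multiple of it -/
private lemma napoleon_para2 (w z : EuclideanSpace ℝ (Fin 2)) (hw : w 0 ^2 + w 1 ^2 ≠ 0)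
    (h : w 0 * z 1 - w 1 * z 0 = 0) : ∃ t : ℝ, t • w = z := by
  refine ⟨(z 0 * w 0 + z 1 * w 1) / (w 0 ^2 + w 1 ^2), ?_⟩
  ext i
  fin_cases i <;> simp <;> field_simp
  · linear_combination w 1 * h
  · linear_combination (- w 0) * h

private lemma napoleon_mem_line (B C p : EuclideanSpace ℝ (Fin 2))
    (h : p ∈ affineSpan ℝ {B, C}) : ∃ r : ℝ, r • (C - B) + B = p := by
  have h2 : (p - B) +ᵥ B ∈ line[ℝ, B, C] := by simpa using h
  obtain ⟨r, hr⟩ := vadd_left_mem_affineSpan_pair.mp h2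
  exact ⟨r, by simp at hr ⊢; rw [hr]; abel⟩

private lemma napoleon_nz (v : EuclideanSpace ℝ (Fin 2)) (h : v ≠ 0) :
    v 0 ^ 2 + v 1 ^ 2 ≠ 0 := by
  intro h0
  apply h
  have h1 : v 0 = 0 := by nlinarith [sq_nonneg (v 0), sq_nonneg (v 1)]
  have h2 : v 1 = 0 := by nlinarith [sq_nonneg (v 0), sq_nonneg (v 1)]
  ext i
  fin_cases i <;> simpa

/-- strict opposite sides of the line through `B` and `C` forces opposite signs
of the corresponding cross products -/
private lemma napoleon_cross_of_sOppSide (B C X Y : EuclideanSpace ℝ (Fin 2))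
    (hBC : (C - B) 0 ^2 + (C - B) 1 ^2 ≠ 0)
    (h : (affineSpan ℝ {B, C}).SOppSide X Y) :
    ((C-B) 0 * (X-B) 1 - (C-B) 1 * (X-B) 0) *
      ((C-B) 0 * (Y-B) 1 - (C-B) 1 * (Y-B) 0) < 0 := by
  obtain ⟨hX, hY, p, hp, hray⟩ :=
    (sOppSide_iff_exists_left (left_mem_affineSpan_pair ℝ B C)).mp h
  obtain ⟨r, hr⟩ := napoleon_mem_line B C p hp
  set L : EuclideanSpace ℝ (Fin 2) → ℝ := fun v => (C-B) 0 * v 1 - (C-B) 1 * v 0 with hL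
  have hfX : L (X - B) ≠ 0 := by
    intro h0
    exact hX (by
      obtain ⟨t, ht⟩ := napoleon_para2 (C - B) (X - B) hBC h0
      have : X = t • (C - B) + B := by rw [ht]; abel
      rw [this]
      simpa using smul_vsub_vadd_mem_affineSpan_pair (k := ℝ) t B C)
  have hfY : L (Y - B) ≠ 0 := by
    intro h0
    exact hY (by
      obtain ⟨t, ht⟩ := napoleon_para2 (C - B) (Y - B) hBC h0
      have : Y = t • (C - B) + B := by rw [ht]; abel
      rw [this]
      simpa using smul_vsub_vadd_mem_affineSpan_pair (k := ℝ) t B C)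
  have hu : (X -ᵥ B : EuclideanSpace ℝ (Fin 2)) = X - B := rfl
  have hv : (p -ᵥ Y : EuclideanSpace ℝ (Fin 2)) = p - Y := rfl
  rcases hray with h0 | h0 | ⟨r₁, r₂, hr₁, hr₂, hrr⟩
  · exfalso; apply hfX; rw [hu] at h0; rw [h0]; simp [hL]
  · exfalso
    rw [hv, sub_eq_zero] at h0
    exact hY (h0 ▸ hp)
  · rw [hu, hv] at hrr
    have hLlin : ∀ (a : ℝ) (u v : EuclideanSpace ℝ (Fin 2)),
        L (a • u) = a * L u ∧ L (u + v) = L u + L v := by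
      intro a u v
      constructor <;> simp [hL] <;> ring
    have hkey : r₁ * L (X - B) = r₂ * L (p - Y) := by
      have := congrArg L hrr
      rw [(hLlin r₁ (X - B) 0).1, (hLlin r₂ (p - Y) 0).1] at this
      exact this
    have hpY : L (p - Y) = - L (Y - B) := by
      rw [← hr]; simp [hL]; ring
    have : L (X - B) * L (Y - B) < 0 := by
      rw [hpY] at hkey
      rcases lt_or_gt_of_ne hfX with hx | hx <;> rcases lt_or_gt_of_ne hfY with hy | hy <;>
        nlinarith
    exact this

/-- the apex of an equilateral triangle erected on the segment from `(b0,b1)` to `(c0,c1)`,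
on the prescribed side -/
private lemma napoleon_apex (b0 b1 c0 c1 p0 p1 d : ℝ)
    (h1 : (p0-b0)^2+(p1-b1)^2 = (b0-c0)^2+(b1-c1)^2)
    (h2 : (p0-c0)^2+(p1-c1)^2 = (b0-c0)^2+(b1-c1)^2)
    (hs : d * ((c0-b0)*(p1-b1) - (c1-b1)*(p0-b0)) < 0) :
    ∃ e : ℝ, e^2 = 3/4 ∧ e*d < 0 ∧
      p0 = (b0+c0)/2 - e*(c1-b1) ∧ p1 = (b1+c1)/2 + e*(c0-b0) := by
  set u0 : ℝ := c0 - b0 with hu0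
  set u1 : ℝ := c1 - b1 with hu1
  set x : ℝ := p0 - (b0+c0)/2 with hx
  set y : ℝ := p1 - (b1+c1)/2 with hy
  set n : ℝ := u0^2 + u1^2 with hn
  set E : ℝ := u0*y - u1*x with hE
  have hcross : (c0-b0)*(p1-b1) - (c1-b1)*(p0-b0) = E := by
    simp only [hE, hu0, hu1, hx, hy]; ring
  rw [hcross] at hs
  have hnpos : 0 < n := by
    rcases lt_or_eq_of_le (by positivity : (0:ℝ) ≤ n) with h | h
    · exact h
    · exfalso
      have h0 : u0 = 0 ∧ u1 = 0 := by constructor <;> nlinarith [sq_nonneg u0, sq_nonneg u1]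
      rw [hE, h0.1, h0.2] at hs
      simp at hs
  have hlin : u0*x + u1*y = 0 := by
    simp only [hu0, hu1, hx, hy]; linear_combination (h1 - h2) / 2
  have hA : n * x = -E * u1 := by linear_combination u0 * hlin
  have hB : n * y = E * u0 := by linear_combination u1 * hlin
  have hE2 : E^2 = 3/4 * n^2 := by
    have hh1 : x^2 + y^2 + (u0*x + u1*y) + n/4 = n := by
      simp only [hu0, hu1, hx, hy, hn]; linear_combination h1
    linear_combination n * hh1 + (-(u0*x + u1*y) - n) * hlin
  refine ⟨E / n, ?_, ?_, ?_, ?_⟩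
  · rw [div_pow, div_eq_iff (by positivity : n^2 ≠ 0)]
    linear_combination hE2
  · rw [div_mul_eq_mul_div]
    exact div_neg_of_neg_of_pos (by nlinarith [hs]) hnpos
  · have h4 : E/n*u1 = -x := by
      rw [div_mul_eq_mul_div, div_eq_iff hnpos.ne']
      linear_combination hA
    rw [h4, hx]; ring
  · have h5 : E/n*u0 = y := by
      rw [div_mul_eq_mul_div, div_eq_iff hnpos.ne']
      linear_combination -hB
    rw [h5, hy]; ring

end NapoleonAux

theorem napoleon_centroid_coincide
    (A B C A₁ B₁ C₁ : EuclideanSpace ℝ (Fin 2))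
    (hABC : AffineIndependent ℝ ![A, B, C])
    (hA₁ : dist A₁ B = dist B C) (hA₁' : dist A₁ C = dist B C)
    (hB₁ : dist A B₁ = dist A C) (hB₁' : dist B₁ C = dist A C)
    (hC₁ : dist A C₁ = dist A B) (hC₁' : dist B C₁ = dist A B)
    (hsideA : (affineSpan ℝ {B, C}).SOppSide A A₁)
    (hsideB : (affineSpan ℝ {C, A}).SOppSide B B₁)
    (hsideC : (affineSpan ℝ {A, B}).SOppSide C C₁)
    (A₂ B₂ C₂ : EuclideanSpace ℝ (Fin 2))
    (hA₂ : A₂ = (2:ℝ)⁻¹ • (B₁ + C₁))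
    (hB₂ : B₂ = (2:ℝ)⁻¹ • (C₁ + A₁))
    (hC₂ : C₂ = (2:ℝ)⁻¹ • (A₁ + B₁)) :
    (3:ℝ)⁻¹ • (A₁ + B₁ + C₁) = (3:ℝ)⁻¹ • (A + B + C) ∧
      (3:ℝ)⁻¹ • (A₂ + B₂ + C₂) = (3:ℝ)⁻¹ • (A + B + C) := by
  -- pairwise distinct vertices
  have hAB : A ≠ B := by
    have := hABC.injective.ne (show (0 : Fin 3) ≠ 1 by decide); simpa using this
  have hAC : A ≠ C := by
    have := hABC.injective.ne (show (0 : Fin 3) ≠ 2 by decide); simpa using this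
  have hBC : B ≠ C := by
    have := hABC.injective.ne (show (1 : Fin 3) ≠ 2 by decide); simpa using this
  -- the doubled signed area
  set δ : ℝ := (B 0 - A 0)*(C 1 - A 1) - (B 1 - A 1)*(C 0 - A 0) with hδdef
  have hδ : δ ≠ 0 := by
    intro h0
    apply affineIndependent_iff_not_collinear_set.mp hABC
    have hnAB : (B - A) 0 ^2 + (B - A) 1 ^2 ≠ 0 :=
      napoleon_nz _ (sub_ne_zero.mpr hAB.symm)
    obtain ⟨t, ht⟩ := napoleon_para2 (B - A) (C - A) hnAB (by
      show (B 0 - A 0) * (C 1 - A 1) - (B 1 - A 1) * (C 0 - A 0) = 0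
      linear_combination h0)
    rw [collinear_iff_of_mem (Set.mem_insert A {B, C})]
    refine ⟨B - A, fun p hp => ?_⟩
    rcases hp with h | h | h
    · exact ⟨0, by simp [h]⟩
    · refine ⟨1, ?_⟩
      rw [h, one_smul]
      show B = (B - A) + A
      abel
    · refine ⟨t, ?_⟩
      rw [Set.mem_singleton_iff] at h
      rw [h]
      show C = t • (B - A) + A
      rw [ht]; abel
  -- squared distance equations in coordinates
  have sqA1 : (A₁ 0 - B 0)^2 + (A₁ 1 - B 1)^2 = (B 0 - C 0)^2 + (B 1 - C 1)^2 := by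
    have h := congrArg (· ^ 2) hA₁
    simpa only [napoleon_dist_sq] using h
  have sqA2 : (A₁ 0 - C 0)^2 + (A₁ 1 - C 1)^2 = (B 0 - C 0)^2 + (B 1 - C 1)^2 := by
    have h := congrArg (· ^ 2) hA₁'
    simp only [napoleon_dist_sq] at h
    linear_combination h
  have sqB1 : (B₁ 0 - C 0)^2 + (B₁ 1 - C 1)^2 = (C 0 - A 0)^2 + (C 1 - A 1)^2 := by
    have h := congrArg (· ^ 2) hB₁'
    simp only [napoleon_dist_sq] at h
    linear_combination h
  have sqB2 : (B₁ 0 - A 0)^2 + (B₁ 1 - A 1)^2 = (C 0 - A 0)^2 + (C 1 - A 1)^2 := by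
    have h := congrArg (· ^ 2) hB₁
    simp only [napoleon_dist_sq] at h
    linear_combination h
  have sqC1 : (C₁ 0 - A 0)^2 + (C₁ 1 - A 1)^2 = (A 0 - B 0)^2 + (A 1 - B 1)^2 := by
    have h := congrArg (· ^ 2) hC₁
    simp only [napoleon_dist_sq] at h
    linear_combination h
  have sqC2 : (C₁ 0 - B 0)^2 + (C₁ 1 - B 1)^2 = (A 0 - B 0)^2 + (A 1 - B 1)^2 := by
    have h := congrArg (· ^ 2) hC₁'
    simp only [napoleon_dist_sq] at h
    linear_combination h
  -- side conditions
  have crA := napoleon_cross_of_sOppSide B C A A₁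
    (napoleon_nz _ (sub_ne_zero.mpr hBC.symm)) hsideA
  have crB := napoleon_cross_of_sOppSide C A B B₁
    (napoleon_nz _ (sub_ne_zero.mpr hAC)) hsideB
  have crC := napoleon_cross_of_sOppSide A B C C₁
    (napoleon_nz _ (sub_ne_zero.mpr hAB.symm)) hsideC
  have hsA : δ * ((C 0 - B 0)*(A₁ 1 - B 1) - (C 1 - B 1)*(A₁ 0 - B 0)) < 0 := by
    have h2 : ((C-B) 0 * (A-B) 1 - (C-B) 1 * (A-B) 0) = δ := by
      show (C 0 - B 0) * (A 1 - B 1) - (C 1 - B 1) * (A 0 - B 0) = δ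
      rw [hδdef]; ring
    rw [h2] at crA
    exact crA
  have hsB : δ * ((A 0 - C 0)*(B₁ 1 - C 1) - (A 1 - C 1)*(B₁ 0 - C 0)) < 0 := by
    have h2 : ((A-C) 0 * (B-C) 1 - (A-C) 1 * (B-C) 0) = δ := by
      show (A 0 - C 0) * (B 1 - C 1) - (A 1 - C 1) * (B 0 - C 0) = δ
      rw [hδdef]; ring
    rw [h2] at crB
    exact crB
  have hsC : δ * ((B 0 - A 0)*(C₁ 1 - A 1) - (B 1 - A 1)*(C₁ 0 - A 0)) < 0 := by
    have h2 : ((B-A) 0 * (C-A) 1 - (B-A) 1 * (C-A) 0) = δ := by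
      show (B 0 - A 0) * (C 1 - A 1) - (B 1 - A 1) * (C 0 - A 0) = δ
      rw [hδdef]
    rw [h2] at crC
    exact crC
  -- apex coordinates
  obtain ⟨e₁, he₁, hd₁, hA₁0, hA₁1⟩ :=
    napoleon_apex (B 0) (B 1) (C 0) (C 1) (A₁ 0) (A₁ 1) δ sqA1 sqA2 hsA
  obtain ⟨e₂, he₂, hd₂, hB₁0, hB₁1⟩ :=
    napoleon_apex (C 0) (C 1) (A 0) (A 1) (B₁ 0) (B₁ 1) δ
      (by linear_combination sqB1) (by linear_combination sqB2) hsB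
  obtain ⟨e₃, he₃, hd₃, hC₁0, hC₁1⟩ :=
    napoleon_apex (A 0) (A 1) (B 0) (B 1) (C₁ 0) (C₁ 1) δ
      (by linear_combination sqC1) (by linear_combination sqC2) hsC
  -- all three signs agree
  have key : ∀ a b : ℝ, a^2 = 3/4 → b^2 = 3/4 → a*δ < 0 → b*δ < 0 → a = b := by
    intro a b ha hb had hbd
    have h1 : (a - b) * (a + b) = 0 := by linear_combination ha - hb
    rcases mul_eq_zero.mp h1 with h | h
    · linarith [sub_eq_zero.mp h]
    · exfalso
      have hb' : b = -a := by linarith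
      rw [hb'] at hbd
      have : -(a*δ) < 0 := by linarith [hbd, neg_mul a δ]
      linarith
  have he12 : e₁ = e₂ := key e₁ e₂ he₁ he₂ hd₁ hd₂
  have he13 : e₁ = e₃ := key e₁ e₃ he₁ he₃ hd₁ hd₃
  -- the sum of the apexes
  have hsum : A₁ + B₁ + C₁ = A + B + C := by
    rw [← he12] at hB₁0 hB₁1
    rw [← he13] at hC₁0 hC₁1
    ext i
    fin_cases i
    · show A₁ 0 + B₁ 0 + C₁ 0 = A 0 + B 0 + C 0
      rw [hA₁0, hB₁0, hC₁0]; ring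
    · show A₁ 1 + B₁ 1 + C₁ 1 = A 1 + B 1 + C 1
      rw [hA₁1, hB₁1, hC₁1]; ring
  constructor
  · rw [hsum]
  · rw [hA₂, hB₂, hC₂]
    have h2 : (2:ℝ)⁻¹ • (B₁ + C₁) + (2:ℝ)⁻¹ • (C₁ + A₁) + (2:ℝ)⁻¹ • (A₁ + B₁)
        = A₁ + B₁ + C₁ := by module
    rw [h2, hsum]
end

section
/- Let A₁, B₁, C₁ be a non-overlapping Napoleon configuration for a nondegenerate triangle ABC in the Euclidean plane, and let A₂, B₂, C₂ be the midpoints of B₁C₁, C₁A₁, A₁B₁ respectively. Let A* = (A+B₂+C₂)/3, B* = (A₂+B₂+C)/3 and C* = (A₂+B+C₂)/3 be the centroids of the equilateral triangles AB₂C₂, A₂B₂C and A₂BC₂. Then the triangle A*B*C* is equilateral and its centroid (A*+B*+C*)/3 equals the centroid G = (A+B+C)/3 of triangle ABC. -/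
/-!
Identify the plane with `ℂ`. If `pbc` is equilateral, then `p = b + u * (c - b)` for a root `u`
of `u ^ 2 - u + 1` (a primitive sixth root of unity). The root is fixed by the sign of `Im u`,
which the "outer" condition forces to be opposite to the orientation of `ABC`, so all three
outer triangles use the same `u`. Expanding then gives `A* - C* = u * (B* - C*)`, and
`‖u‖ = ‖u - 1‖ = 1` makes `A*B*C*` equilateral. The centroids agree because
`A₁ + B₁ + C₁ = A + B + C`.
-/

theorem AffineSubspace.SOppSide.mul_neg_of_mem_iff_eq_zero {V P : Type*} [AddCommGroup V]
    [Module ℝ V] [AddTorsor V P] {s : AffineSubspace ℝ P} {f : P →ᵃ[ℝ] ℝ}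
    (hf : ∀ p, p ∈ s ↔ f p = 0) {x y : P} (h : s.SOppSide x y) : f x * f y < 0 := by
  obtain ⟨⟨p₁, hp₁, p₂, hp₂, hray⟩, hx, hy⟩ := h
  have hfx : f x ≠ 0 := fun h0 => hx ((hf x).2 h0)
  have hfy : f y ≠ 0 := fun h0 => hy ((hf y).2 h0)
  have hray' : SameRay ℝ (f x) (-f y) := by
    simpa [AffineMap.linearMap_vsub, (hf _).1 hp₁, (hf _).1 hp₂] using hray.map f.linear
  obtain ⟨r₁, r₂, hr₁, hr₂, heq⟩ := hray'.exists_pos hfx (neg_ne_zero.2 hfy)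
  have hprod : r₁ * (f x * f y) = -(r₂ * f y ^ 2) := by
    simp only [smul_eq_mul] at heq
    linear_combination f y * heq
  have hpos : 0 < r₂ * f y ^ 2 := by positivity
  by_contra! hc
  nlinarith [mul_nonneg hr₁.le hc]

theorem AffineSubspace.SOppSide.map_affineSpan_pair {k V P V' P' : Type*} [CommRing k]
    [PartialOrder k] [IsStrictOrderedRing k]
    [AddCommGroup V] [Module k V] [AddTorsor V P] [AddCommGroup V'] [Module k V'] [AddTorsor V' P']
    (f : P ≃ᵃ[k] P') {a b c p : P} (h : (affineSpan k {b, c}).SOppSide a p) :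
    (affineSpan k {f b, f c}).SOppSide (f a) (f p) := by
  simpa [AffineSubspace.map_span, Set.image_pair] using
    (f.sOppSide_map_iff (s := affineSpan k {b, c})).2 h

namespace Complex

open ComplexConjugate

theorem norm_eq_one_of_sq_sub_add_one_eq_zero {u : ℂ} (hu : u ^ 2 - u + 1 = 0) : ‖u‖ = 1 := by
  have hcube : u ^ 3 = -1 := by linear_combination (u + 1) * hu
  have : ‖u‖ ^ 3 = 1 := by rw [← norm_pow, hcube, norm_neg, norm_one]
  exact (pow_eq_one_iff_of_nonneg (norm_nonneg u) three_ne_zero).1 this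

theorem norm_sub_one_eq_one_of_sq_sub_add_one_eq_zero {u : ℂ} (hu : u ^ 2 - u + 1 = 0) :
    ‖u - 1‖ = 1 := by
  rw [show u - 1 = u ^ 2 by linear_combination -hu, norm_pow,
    norm_eq_one_of_sq_sub_add_one_eq_zero hu, one_pow]

theorem sq_sub_add_one_eq_zero_of_norm_eq_one {u : ℂ} (h₀ : ‖u‖ = 1) (h₁ : ‖u - 1‖ = 1) :
    u ^ 2 - u + 1 = 0 := by
  have h₀' := normSq_eq_norm_sq u
  have h₁' := normSq_eq_norm_sq (u - 1)
  rw [h₀, normSq_apply] at h₀'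
  rw [h₁, normSq_apply, sub_re, one_re, sub_im, one_im, sub_zero] at h₁'
  have hre : u.re = 1 / 2 := by linear_combination (h₀' - h₁') / 2
  apply Complex.ext <;>
    simp only [sq, add_re, sub_re, mul_re, add_im, sub_im, mul_im, one_re, one_im, zero_re, zero_im]
  · linear_combination 2 * u.re * hre - h₀'
  · linear_combination 2 * u.im * hre

theorem eq_of_sq_sub_add_one_eq_zero_of_im_mul_neg {u v : ℂ} {d : ℝ} (hu : u ^ 2 - u + 1 = 0)
    (hv : v ^ 2 - v + 1 = 0) (hud : u.im * d < 0) (hvd : v.im * d < 0) : u = v := by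
  have hfactor : (u - v) * (u + v - 1) = 0 := by linear_combination hu - hv
  rcases mul_eq_zero.1 hfactor with huv | huv
  · exact sub_eq_zero.1 huv
  · have him : u.im = -v.im := by simpa using congrArg im (eq_sub_of_add_eq (sub_eq_zero.1 huv))
    rw [him, neg_mul] at hud
    linarith

theorem dist_eq_of_sub_eq_mul {u x y z : ℂ} (hu : u ^ 2 - u + 1 = 0) (h : x - z = u * (y - z)) :
    dist x y = dist y z ∧ dist y z = dist z x := by
  have hxy : x - y = (u - 1) * (y - z) := by linear_combination h
  constructor
  · rw [dist_eq, dist_eq, hxy, norm_mul, norm_sub_one_eq_one_of_sq_sub_add_one_eq_zero hu, one_mul]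
  · rw [dist_eq, dist_eq, norm_sub_rev z, h, norm_mul, norm_eq_one_of_sq_sub_add_one_eq_zero hu,
      one_mul]

theorem exists_sq_sub_add_one_eq_zero_of_dist_eq {b c p : ℂ} (hbc : b ≠ c)
    (hpb : dist p b = dist b c) (hpc : dist p c = dist b c) :
    ∃ u, u ^ 2 - u + 1 = 0 ∧ p = b + u * (c - b) := by
  have hcb : c - b ≠ 0 := sub_ne_zero.2 hbc.symm
  have hn : dist c b ≠ 0 := dist_ne_zero.2 hbc.symm
  refine ⟨(p - b) / (c - b), sq_sub_add_one_eq_zero_of_norm_eq_one ?_ ?_, by field_simp; ring⟩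
  · rw [norm_div, ← dist_eq, ← dist_eq, hpb, dist_comm, div_self hn]
  · rw [show (p - b) / (c - b) - 1 = (p - c) / (c - b) by field_simp; ring, norm_div, ← dist_eq,
      ← dist_eq, hpc, dist_comm, div_self hn]

theorem mem_affineSpan_pair_iff_im_mul_conj_eq_zero {b c z : ℂ} (hbc : b ≠ c) :
    z ∈ affineSpan ℝ {b, c} ↔ ((z - b) * conj (c - b)).im = 0 := by
  rw [mem_affineSpan_pair_iff_exists_lineMap_eq]
  constructor
  · rintro ⟨r, rfl⟩
    rw [AffineMap.lineMap_apply_module, show (1 - r) • b + r • c - b = (r : ℂ) * (c - b) by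
      simp only [real_smul]; push_cast; ring, mul_assoc, mul_conj, ← ofReal_mul, ofReal_im]
  · intro h
    have hw : (z - b) * conj (c - b) = (((z - b) * conj (c - b)).re : ℂ) :=
      ext rfl (by simpa using h)
    refine ⟨((z - b) * conj (c - b)).re / normSq (c - b), ?_⟩
    rw [AffineMap.lineMap_apply_module]
    have hcb : c - b ≠ 0 := sub_ne_zero.2 hbc.symm
    have hcb' : conj (c - b) ≠ 0 := (map_ne_zero _).2 hcb
    simp only [real_smul]
    push_cast
    rw [← hw, ← mul_conj]
    field_simp
    ring

theorem im_mul_conj_mul_neg_of_sOppSide {a b c p : ℂ} (hbc : b ≠ c)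
    (h : (affineSpan ℝ {b, c}).SOppSide a p) :
    ((a - b) * conj (c - b)).im * ((p - b) * conj (c - b)).im < 0 := by
  let f : ℂ →ᵃ[ℝ] ℝ :=
    { toFun z := ((z - b) * conj (c - b)).im
      linear := imLm ∘ₗ LinearMap.mulRight ℝ (conj (c - b))
      map_vadd' z v := by
        simp only [vadd_eq_add, LinearMap.coe_comp, imLm_coe, Function.comp_apply,
          LinearMap.mulRight_apply, ← add_im, ← add_mul, add_sub_assoc] }
  exact h.mul_neg_of_mem_iff_eq_zero (f := f) fun z =>
    mem_affineSpan_pair_iff_im_mul_conj_eq_zero hbc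

theorem exists_apex_of_sOppSide {a b c p : ℂ} (hpb : dist p b = dist b c)
    (hpc : dist p c = dist b c) (hside : (affineSpan ℝ {b, c}).SOppSide a p) :
    ∃ u, u ^ 2 - u + 1 = 0 ∧ p = b + u * (c - b) ∧ u.im * ((a - b) * conj (c - b)).im < 0 := by
  have hbc : b ≠ c := by
    rintro rfl
    exact hside.2.2 (by rw [dist_self, dist_eq_zero] at hpb; simp [hpb])
  obtain ⟨u, hu, rfl⟩ := exists_sq_sub_add_one_eq_zero_of_dist_eq hbc hpb hpc
  refine ⟨u, hu, rfl, ?_⟩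
  have hside' := im_mul_conj_mul_neg_of_sOppSide hbc hside
  have hN : 0 < normSq (c - b) := normSq_pos.2 (sub_ne_zero.2 hbc.symm)
  rw [add_sub_cancel_left, mul_assoc, mul_conj, im_mul_ofReal, ← mul_assoc, mul_comm _ u.im]
    at hside'
  exact neg_of_mul_neg_left hside' hN.le

theorem exists_napoleon_factor {a b c a₁ b₁ c₁ : ℂ}
    (ha₁ : dist a₁ b = dist b c) (ha₁' : dist a₁ c = dist b c)
    (hb₁ : dist a b₁ = dist a c) (hb₁' : dist b₁ c = dist a c)
    (hc₁ : dist a c₁ = dist a b) (hc₁' : dist b c₁ = dist a b)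
    (hsa : (affineSpan ℝ {b, c}).SOppSide a a₁) (hsb : (affineSpan ℝ {c, a}).SOppSide b b₁)
    (hsc : (affineSpan ℝ {a, b}).SOppSide c c₁) :
    ∃ u, u ^ 2 - u + 1 = 0 ∧
      a₁ = b + u * (c - b) ∧ b₁ = c + u * (a - c) ∧ c₁ = a + u * (b - a) := by
  obtain ⟨u, hu, rfl, hua⟩ := exists_apex_of_sOppSide ha₁ ha₁' hsa
  obtain ⟨v, hv, rfl, hvb⟩ := exists_apex_of_sOppSide (by rwa [dist_comm c])
    (by rwa [dist_comm b₁, dist_comm c]) hsb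
  obtain ⟨w, hw, rfl, hwc⟩ := exists_apex_of_sOppSide (by rwa [dist_comm]) (by rwa [dist_comm])
    hsc
  -- twice the signed area of `abc`, computed from each vertex
  have hb : ((b - c) * conj (a - c)).im = ((a - b) * conj (c - b)).im := by
    simp only [map_sub, mul_im, sub_re, sub_im, conj_re, conj_im]; ring
  have hc : ((c - a) * conj (b - a)).im = ((a - b) * conj (c - b)).im := by
    simp only [map_sub, mul_im, sub_re, sub_im, conj_re, conj_im]; ring
  rw [hb] at hvb
  rw [hc] at hwc
  obtain rfl := eq_of_sq_sub_add_one_eq_zero_of_im_mul_neg hv hu hvb hua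
  obtain rfl := eq_of_sq_sub_add_one_eq_zero_of_im_mul_neg hw hv hwc hvb
  exact ⟨w, hw, rfl, rfl, rfl⟩

end Complex

theorem napoleon_star_triangle_general
    (A B C A₁ B₁ C₁ : EuclideanSpace ℝ (Fin 2))
    (hA₁ : dist A₁ B = dist B C) (hA₁' : dist A₁ C = dist B C)
    (hB₁ : dist A B₁ = dist A C) (hB₁' : dist B₁ C = dist A C)
    (hC₁ : dist A C₁ = dist A B) (hC₁' : dist B C₁ = dist A B)
    (hsideA : (affineSpan ℝ {B, C}).SOppSide A A₁)
    (hsideB : (affineSpan ℝ {C, A}).SOppSide B B₁)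
    (hsideC : (affineSpan ℝ {A, B}).SOppSide C C₁)
    (A₂ B₂ C₂ Astar Bstar Cstar : EuclideanSpace ℝ (Fin 2))
    (hA₂ : A₂ = (2:ℝ)⁻¹ • (B₁ + C₁))
    (hB₂ : B₂ = (2:ℝ)⁻¹ • (C₁ + A₁))
    (hC₂ : C₂ = (2:ℝ)⁻¹ • (A₁ + B₁))
    (hAstar : Astar = (3:ℝ)⁻¹ • (A + B₂ + C₂))
    (hBstar : Bstar = (3:ℝ)⁻¹ • (A₂ + B₂ + C))
    (hCstar : Cstar = (3:ℝ)⁻¹ • (A₂ + B + C₂)) :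
    (dist Astar Bstar = dist Bstar Cstar ∧ dist Bstar Cstar = dist Cstar Astar) ∧
      (3:ℝ)⁻¹ • (Astar + Bstar + Cstar) = (3:ℝ)⁻¹ • (A + B + C) := by
  let e : EuclideanSpace ℝ (Fin 2) ≃ₗᵢ[ℝ] ℂ := Complex.orthonormalBasisOneI.repr.symm
  have he {a b c p} (h : (affineSpan ℝ {b, c}).SOppSide a p) :
      (affineSpan ℝ {e b, e c}).SOppSide (e a) (e p) :=
    h.map_affineSpan_pair e.toLinearEquiv.toAffineEquiv
  obtain ⟨u, hu, hA₁u, hB₁u, hC₁u⟩ := Complex.exists_napoleon_factor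
    (by rwa [e.dist_map, e.dist_map]) (by rwa [e.dist_map, e.dist_map])
    (by rwa [e.dist_map, e.dist_map]) (by rwa [e.dist_map, e.dist_map])
    (by rwa [e.dist_map, e.dist_map]) (by rwa [e.dist_map, e.dist_map])
    (he hsideA) (he hsideB) (he hsideC)
  have hstar : e Astar - e Cstar = u * (e Bstar - e Cstar) := by
    simp only [hAstar, hBstar, hCstar, hA₂, hB₂, hC₂, map_add, map_smul, Complex.real_smul,
      hA₁u, hB₁u, hC₁u]
    push_cast
    linear_combination (2 * e A - e B - e C) / 6 * hu
  have hsum : e (Astar + Bstar + Cstar) = e (A + B + C) := by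
    simp only [hAstar, hBstar, hCstar, hA₂, hB₂, hC₂, map_add, map_smul, Complex.real_smul,
      hA₁u, hB₁u, hC₁u]
    push_cast
    ring
  refine ⟨by simpa only [e.dist_map] using Complex.dist_eq_of_sub_eq_mul hu hstar, ?_⟩
  rw [e.injective hsum]

theorem napoleon_star_triangle
    (A B C A₁ B₁ C₁ : EuclideanSpace ℝ (Fin 2))
    (hABC : AffineIndependent ℝ ![A, B, C])
    (hA₁ : dist A₁ B = dist B C) (hA₁' : dist A₁ C = dist B C)
    (hB₁ : dist A B₁ = dist A C) (hB₁' : dist B₁ C = dist A C)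
    (hC₁ : dist A C₁ = dist A B) (hC₁' : dist B C₁ = dist A B)
    (hsideA : (affineSpan ℝ {B, C}).SOppSide A A₁)
    (hsideB : (affineSpan ℝ {C, A}).SOppSide B B₁)
    (hsideC : (affineSpan ℝ {A, B}).SOppSide C C₁)
    (A₂ B₂ C₂ Astar Bstar Cstar : EuclideanSpace ℝ (Fin 2))
    (hA₂ : A₂ = (2:ℝ)⁻¹ • (B₁ + C₁))
    (hB₂ : B₂ = (2:ℝ)⁻¹ • (C₁ + A₁))
    (hC₂ : C₂ = (2:ℝ)⁻¹ • (A₁ + B₁))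
    (hAstar : Astar = (3:ℝ)⁻¹ • (A + B₂ + C₂))
    (hBstar : Bstar = (3:ℝ)⁻¹ • (A₂ + B₂ + C))
    (hCstar : Cstar = (3:ℝ)⁻¹ • (A₂ + B + C₂)) :
    (dist Astar Bstar = dist Bstar Cstar ∧ dist Bstar Cstar = dist Cstar Astar) ∧
      (3:ℝ)⁻¹ • (Astar + Bstar + Cstar) = (3:ℝ)⁻¹ • (A + B + C) :=
  napoleon_star_triangle_general A B C A₁ B₁ C₁ hA₁ hA₁' hB₁ hB₁' hC₁ hC₁' hsideA hsideB hsideC A₂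
    B₂ C₂ Astar Bstar Cstar hA₂ hB₂ hC₂ hAstar hBstar hCstar
end
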